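/- Let α ≥ 1/4 be a real number. There exists C > 0 with the following property: for every c : ℕ → ℂ and B ≥ 0 such that (1+k)^α |c_k| ≤ B for all k ∈ ℕ, the sum T(c)_k = (1/(2π)) Σ_{ℓ,m,n ≥ 0, k+ℓ = m+n} ((k+ℓ)!/(2^{k+ℓ} √(k! ℓ! m! n!))) \overline{c_ℓ} c_m c_n converges absolutely for every k, and (1+k)^α |T(c)_k| ≤ C B³ for all k ∈ ℕ. -/

import Mathlib

/-- The interaction coefficient `(k+ℓ)! / (2^{k+ℓ} √(k! ℓ! m! n!))`. -/
noncomputable def LLLcoef (k l m n : ℕ) : ℝ :=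
  ((k + l).factorial : ℝ) /
    (2 ^ (k + l) * Real.sqrt ((k.factorial : ℝ) * l.factorial * m.factorial * n.factorial))

/-- The `k`-th term of the LLL trilinear form `T(c)`, as a sum over triples `(ℓ,m,n)`
with `k + ℓ = m + n`. -/
noncomputable def LLLterm (c : ℕ → ℂ) (k : ℕ) (t : ℕ × ℕ × ℕ) : ℂ :=
  if k + t.1 = t.2.1 + t.2.2 then
    ((LLLcoef k t.1 t.2.1 t.2.2 : ℝ) : ℂ) * (starRingEnd ℂ) (c t.1) * c t.2.1 * c t.2.2
  else 0


set_option maxHeartbeats 1000000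

open Finset Real

lemma geo_le {q : ℝ} (h0 : 0 ≤ q) (h1 : q < 1) (N : ℕ) :
    ∑ i ∈ range N, q ^ i ≤ 1 / (1 - q) := by
  rw [geom_sum_eq (ne_of_lt h1) N]
  have h2 : (q ^ N - 1) / (q - 1) = (1 - q ^ N) / (1 - q) := by
    rw [div_eq_div_iff (by linarith) (by linarith)]; ring
  rw [h2, div_le_div_iff₀ (by linarith) (by linarith)]
  nlinarith [pow_nonneg h0 N]

lemma one_sub_exp_inv {c : ℝ} (hc : 0 < c) : 1 / (1 - Real.exp (-c)) ≤ 1 + 1 / c := by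
  have h1 : Real.exp (-c) ≤ 1 / (1 + c) := by
    rw [Real.exp_neg, inv_eq_one_div, div_le_div_iff₀ (Real.exp_pos c) (by linarith)]
    nlinarith [Real.add_one_le_exp c]
  have h2 : (0:ℝ) < 1 - Real.exp (-c) := by
    have := Real.exp_lt_one_iff.mpr (by linarith : -c < 0); linarith
  rw [div_le_iff₀ h2]
  have : c / (1 + c) ≤ 1 - Real.exp (-c) := by
    have : 1 - 1/(1+c) = c/(1+c) := by field_simp; ring
    linarith
  calc (1:ℝ) = (1 + 1/c) * (c/(1+c)) := by field_simp; ring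
    _ ≤ (1 + 1/c) * (1 - Real.exp (-c)) := by
        apply mul_le_mul_of_nonneg_left this
        positivity

lemma sum_pow_dist {q : ℝ} (h0 : 0 ≤ q) (h1 : q < 1) (k N : ℕ) :
    ∑ l ∈ range N, q ^ (Nat.dist l k) ≤ 2 / (1 - q) := by
  have hN : ∑ l ∈ range N, q ^ (Nat.dist l k) ≤ ∑ l ∈ range (N + (k+1)), q ^ (Nat.dist l k) := by
    apply Finset.sum_le_sum_of_subset_of_nonneg
    · exact Finset.range_subset_range.2 (by omega)
    · intros; positivity
  apply hN.trans
  set M := N + (k+1) with hM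
  have hsplit : ∑ l ∈ range M, q ^ (Nat.dist l k)
      = ∑ l ∈ range (k+1), q ^ (Nat.dist l k) + ∑ l ∈ Ico (k+1) M, q ^ (Nat.dist l k) := by
    rw [Finset.range_eq_Ico, ← Finset.sum_Ico_consecutive _ (Nat.zero_le _) (by omega : k+1 ≤ M),
      ← Finset.range_eq_Ico]
  rw [hsplit]
  have h3 : ∑ l ∈ range (k+1), q ^ (Nat.dist l k) = ∑ i ∈ range (k+1), q ^ i := by
    rw [← Finset.sum_range_reflect]
    apply Finset.sum_congr rfl
    intro i hi
    simp only [Finset.mem_range] at hi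
    congr 1
    rw [Nat.dist_eq_sub_of_le (by omega)]
    omega
  have h4 : ∑ l ∈ Ico (k+1) M, q ^ (Nat.dist l k) ≤ ∑ i ∈ range (M - (k+1)), q ^ i := by
    rw [Finset.sum_Ico_eq_sum_range]
    apply Finset.sum_le_sum
    intro i _
    have : Nat.dist (k+1+i) k = i + 1 := by
      rw [Nat.dist_eq_sub_of_le_right (by omega)]; omega
    rw [this]
    calc q ^ (i+1) ≤ q ^ i * 1 := by
          rw [pow_succ]; exact mul_le_mul_of_nonneg_left (le_of_lt h1) (pow_nonneg h0 i)
      _ = q ^ i := mul_one _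
  have g1 := geo_le h0 h1 (k+1)
  have g2 := geo_le h0 h1 (M - (k+1))
  have : (2:ℝ) / (1-q) = 1/(1-q) + 1/(1-q) := by ring
  rw [this, h3]
  exact add_le_add g1 (h4.trans g2)

lemma cb_sqrt (n : ℕ) : (Nat.centralBinom n : ℝ) * Real.sqrt (3*n+1) ≤ 4 ^ n := by
  induction n with
  | zero => simp [Nat.centralBinom]
  | succ n ih =>
    have hrec := Nat.succ_mul_centralBinom_succ n
    have hrecR : ((n:ℝ)+1) * (Nat.centralBinom (n+1) : ℝ)
        = 2*(2*n+1) * (Nat.centralBinom n : ℝ) := by exact_mod_cast hrec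
    set x : ℝ := (n : ℝ) with hx
    have hx0 : 0 ≤ x := Nat.cast_nonneg n
    have hs : Real.sqrt (3*(x+1)+1) * (2*x+1) ≤ 2*(x+1) * Real.sqrt (3*x+1) := by
      have l1 : Real.sqrt (3*(x+1)+1) * (2*x+1) = Real.sqrt ((3*x+4)*(2*x+1)^2) := by
        rw [Real.sqrt_mul (by linarith), Real.sqrt_sq (by linarith)]; ring_nf
      have l2 : 2*(x+1) * Real.sqrt (3*x+1) = Real.sqrt ((3*x+1)*(2*(x+1))^2) := by
        rw [Real.sqrt_mul (by linarith), Real.sqrt_sq (by linarith)]; ring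
      rw [l1, l2]
      apply Real.sqrt_le_sqrt
      nlinarith
    have ha : (0:ℝ) ≤ (Nat.centralBinom n : ℝ) := Nat.cast_nonneg _
    have hsq : (0:ℝ) ≤ Real.sqrt (3*(x+1)+1) := Real.sqrt_nonneg _
    have key : (Nat.centralBinom (n+1) : ℝ) * Real.sqrt (3*(x+1)+1) * (x+1)
        ≤ 4^(n+1) * (x+1) := by
      have e1 : (Nat.centralBinom (n+1) : ℝ) * Real.sqrt (3*(x+1)+1) * (x+1)
          = 2 * (Nat.centralBinom n : ℝ) * (Real.sqrt (3*(x+1)+1) * (2*x+1)) := by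
        linear_combination Real.sqrt (3*(x+1)+1) * hrecR
      rw [e1]
      calc 2 * (Nat.centralBinom n : ℝ) * (Real.sqrt (3*(x+1)+1) * (2*x+1))
          ≤ 2 * (Nat.centralBinom n : ℝ) * (2*(x+1) * Real.sqrt (3*x+1)) := by
            apply mul_le_mul_of_nonneg_left hs (by linarith)
        _ = 4*(x+1) * ((Nat.centralBinom n : ℝ) * Real.sqrt (3*x+1)) := by ring
        _ ≤ 4*(x+1) * 4^n := by apply mul_le_mul_of_nonneg_left ih (by linarith)
        _ = 4^(n+1) * (x+1) := by ring
    have hx1 : (0:ℝ) < x + 1 := by linarith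
    have := (mul_le_mul_iff_of_pos_right hx1).mp key
    calc (Nat.centralBinom (n+1) : ℝ) * Real.sqrt (3*(n+1:ℕ)+1)
        = (Nat.centralBinom (n+1) : ℝ) * Real.sqrt (3*(x+1)+1) := by rw [hx]; push_cast; ring_nf
      _ ≤ 4^(n+1) := this

lemma middle_le (s : ℕ) : ((s.choose (s/2)) : ℝ) * Real.sqrt (s+1) ≤ Real.sqrt 2 * 2^s := by
  rcases Nat.even_or_odd s with ⟨n, hn⟩ | ⟨n, hn⟩
  · subst hn
    have h2 : (n+n)/2 = n := by omega
    rw [h2]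
    have hcb : (n+n).choose n = Nat.centralBinom n := by
      rw [Nat.centralBinom]; congr 1; omega
    rw [hcb]
    rw [show (((n+n:ℕ)):ℝ) = (n:ℝ)+(n:ℝ) by push_cast; ring]
    have h3 : Real.sqrt ((n:ℝ)+n+1) ≤ Real.sqrt 2 * Real.sqrt (3*n+1) := by
      rw [← Real.sqrt_mul (by norm_num)]
      apply Real.sqrt_le_sqrt; push_cast; nlinarith [Nat.cast_nonneg (α := ℝ) n]
    calc (Nat.centralBinom n : ℝ) * Real.sqrt ((n:ℝ)+(n:ℝ)+1)
        ≤ (Nat.centralBinom n : ℝ) * (Real.sqrt 2 * Real.sqrt (3*n+1)) := by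
          apply mul_le_mul_of_nonneg_left _ (Nat.cast_nonneg _)
          · push_cast at h3 ⊢; exact h3
      _ = Real.sqrt 2 * ((Nat.centralBinom n : ℝ) * Real.sqrt (3*n+1)) := by ring
      _ ≤ Real.sqrt 2 * 4^n := by
          apply mul_le_mul_of_nonneg_left (cb_sqrt n) (Real.sqrt_nonneg _)
      _ = Real.sqrt 2 * 2^(n+n) := by
          rw [show n+n=2*n from (two_mul n).symm, pow_mul]; norm_num
  · subst hn
    have h2 : (2*n+1)/2 = n := by omega
    rw [h2]
    have hch : (2*n+1).choose n ≤ 2 * Nat.centralBinom n := by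
      have hsymm : (2*n+1).choose n = (2*n+1).choose (n+1) := by
        have := Nat.choose_symm (show n+1 ≤ 2*n+1 by omega)
        rw [show 2*n+1-(n+1) = n by omega] at this
        exact this
      rw [hsymm, Nat.choose_succ_succ]
      have a1 := Nat.choose_le_centralBinom n n
      have a2 := Nat.choose_le_centralBinom (n+1) n
      simp only [Nat.succ_eq_add_one] at *
      omega
    have hchR : ((2*n+1).choose n : ℝ) ≤ 2 * (Nat.centralBinom n : ℝ) := by exact_mod_cast hch
    have h3 : Real.sqrt ((2*n:ℝ)+1+1) ≤ Real.sqrt 2 * Real.sqrt (3*n+1) := by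
      rw [← Real.sqrt_mul (by norm_num)]
      apply Real.sqrt_le_sqrt; nlinarith [Nat.cast_nonneg (α := ℝ) n]
    calc ((2*n+1).choose n : ℝ) * Real.sqrt ((2*n+1:ℕ)+1)
        ≤ (2 * (Nat.centralBinom n : ℝ)) * (Real.sqrt 2 * Real.sqrt (3*n+1)) := by
          apply mul_le_mul hchR _ (Real.sqrt_nonneg _) (by positivity)
          · push_cast at h3 ⊢; convert h3 using 3 <;> push_cast <;> ring
      _ = Real.sqrt 2 * (2 * ((Nat.centralBinom n : ℝ) * Real.sqrt (3*n+1))) := by ring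
      _ ≤ Real.sqrt 2 * (2 * 4^n) := by
          apply mul_le_mul_of_nonneg_left _ (Real.sqrt_nonneg _)
          apply mul_le_mul_of_nonneg_left (cb_sqrt n) (by norm_num)
      _ = Real.sqrt 2 * 2^(2*n+1) := by
          rw [pow_succ, pow_mul]; norm_num; ring

lemma gauss_aux (s : ℕ) : ∀ r : ℕ,
    (s.choose ((s+1)/2 + r) : ℝ) * Real.sqrt (s+1)
      ≤ Real.sqrt 2 * 2^s * Real.exp ((1 - (2*((((s+1)/2 + r : ℕ)) : ℝ) - s)^2) / (8*s)) := by
  intro r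
  induction r with
  | zero =>
    set j := (s+1)/2 + 0 with hj
    have hd0 : (s:ℕ) ≤ 2*j := by omega
    have hd1 : 2*j ≤ s+1 := by omega
    have hdr0 : (0:ℝ) ≤ 2*(j:ℝ) - s := by
      have : (s:ℝ) ≤ 2*(j:ℝ) := by exact_mod_cast hd0
      linarith
    have hdr1 : 2*(j:ℝ) - s ≤ 1 := by
      have : (2*(j:ℝ)) ≤ (s:ℝ)+1 := by exact_mod_cast hd1
      linarith
    have hexp : (0:ℝ) ≤ (1 - (2*((j:ℕ) : ℝ) - s)^2) / (8*s) := by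
      apply div_nonneg _ (by positivity)
      nlinarith
    have h1 : (s.choose j : ℝ) ≤ (s.choose (s/2) : ℝ) := by
      exact_mod_cast Nat.choose_le_middle j s
    calc (s.choose j : ℝ) * Real.sqrt (s+1)
        ≤ (s.choose (s/2) : ℝ) * Real.sqrt (s+1) := by
          apply mul_le_mul_of_nonneg_right h1 (Real.sqrt_nonneg _)
      _ ≤ Real.sqrt 2 * 2^s := middle_le s
      _ ≤ Real.sqrt 2 * 2^s * Real.exp ((1 - (2*((j:ℕ) : ℝ) - s)^2) / (8*s)) := by
          nlinarith [Real.one_le_exp hexp, Real.sqrt_nonneg 2,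
            pow_pos (show (0:ℝ) < 2 by norm_num) s, Real.exp_pos ((1 - (2*((j:ℕ) : ℝ) - s)^2) / (8*s)),
            mul_pos (Real.sqrt_pos.mpr (show (0:ℝ) < 2 by norm_num)) (pow_pos (show (0:ℝ) < 2 by norm_num) s)]
  | succ r ih =>
    set j := (s+1)/2 + r with hj
    have hj1 : (s+1)/2 + (r+1) = j + 1 := by omega
    rw [hj1]
    by_cases hjs : s < j + 1
    · rw [Nat.choose_eq_zero_of_lt hjs]
      simp only [Nat.cast_zero, zero_mul]
      positivity
    · push_neg at hjs
      have h2j : s ≤ 2*j := by omega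
      have hs2 : 2 ≤ s := by omega
      have hjles : j ≤ s := by omega
      set d : ℝ := 2*(j:ℝ) - s with hd
      have hd0 : (0:ℝ) ≤ d := by
        have : (s:ℝ) ≤ 2*(j:ℝ) := by exact_mod_cast h2j
        simp [hd]; linarith
      have hdle : d ≤ (s:ℝ) - 2 := by
        have : ((j:ℝ)+1) ≤ s := by exact_mod_cast hjs
        simp [hd]; linarith
      have hsR : (2:ℝ) ≤ (s:ℝ) := by exact_mod_cast hs2
      -- ratio inequality
      have hratio : ((s:ℝ) - j) ≤ ((j:ℝ)+1) * Real.exp (-(d+1)/(2*s)) := by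
        have hlin : 1 - (d+1)/(2*s) ≤ Real.exp (-(d+1)/(2*s)) := by
          have := Real.add_one_le_exp (-(d+1)/(2*s))
          have e : -(d+1)/(2*s) = -((d+1)/(2*s)) := neg_div _ _
          linarith [this, e.ge.trans_eq rfl]
        have hcross : ((s:ℝ) - j) ≤ ((j:ℝ)+1) * (1 - (d+1)/(2*s)) := by
          have hspos : (0:ℝ) < 2*s := by linarith
          rw [← sub_nonneg]
          have hjval : (j:ℝ) = ((s:ℝ) + d)/2 := by rw [hd]; ring
          rw [hjval]
          have key : 0 ≤ (3*(s:ℝ)*d + 3*s - d^2 - 3*d - 2) / (4*s) := by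
            apply div_nonneg _ (by linarith)
            nlinarith [mul_nonneg hd0 (show (0:ℝ) ≤ (s:ℝ)-2-d by linarith)]
          have expand : (((s:ℝ)+d)/2+1) * (1 - (d+1)/(2*s)) - ((s:ℝ) - ((s:ℝ)+d)/2)
              = (3*(s:ℝ)*d + 3*s - d^2 - 3*d - 2) / (4*s) := by
            field_simp
            ring
          rw [expand]; exact key
        calc ((s:ℝ) - j) ≤ ((j:ℝ)+1) * (1 - (d+1)/(2*s)) := hcross
          _ ≤ ((j:ℝ)+1) * Real.exp (-(d+1)/(2*s)) := by
              apply mul_le_mul_of_nonneg_left hlin (by positivity)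
      -- choose identity
      have hid : (s.choose (j+1) : ℝ) * ((j:ℝ)+1) = (s.choose j : ℝ) * ((s:ℝ) - j) := by
        have := Nat.choose_succ_right_eq s j
        have hcast : ((s.choose (j+1) * (j+1) : ℕ) : ℝ) = ((s.choose j * (s - j) : ℕ) : ℝ) := by
          exact_mod_cast congrArg (Nat.cast (R := ℝ)) this
        push_cast [Nat.cast_sub hjles] at hcast
        linarith
      -- combine
      have hXY : Real.exp ((1 - d^2)/(8*s)) * Real.exp (-(d+1)/(2*s))
          = Real.exp ((1 - (d+2)^2)/(8*s)) := by
        rw [← Real.exp_add]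
        congr 1
        have : (s:ℝ) ≠ 0 := by linarith
        field_simp
        ring
      have hd2 : 2*(((j+1:ℕ)):ℝ) - s = d + 2 := by push_cast; simp [hd]; ring
      have ihs : (s.choose j : ℝ) * Real.sqrt (s+1) ≤ Real.sqrt 2 * 2^s * Real.exp ((1-d^2)/(8*s)) := ih
      have hfinal : (s.choose (j+1) : ℝ) * Real.sqrt (s+1) * ((j:ℝ)+1)
          ≤ Real.sqrt 2 * 2^s * Real.exp ((1 - (d+2)^2)/(8*s)) * ((j:ℝ)+1) := by
        have e1 : (s.choose (j+1) : ℝ) * Real.sqrt (s+1) * ((j:ℝ)+1)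
            = (s.choose j : ℝ) * Real.sqrt (s+1) * ((s:ℝ) - j) := by
          rw [mul_right_comm]
          rw [hid]
          ring
        rw [e1]
        have hsj0 : (0:ℝ) ≤ (s:ℝ) - j := by
          have : (j:ℝ) ≤ s := by exact_mod_cast hjles
          linarith
        calc (s.choose j : ℝ) * Real.sqrt (s+1) * ((s:ℝ) - j)
            ≤ (Real.sqrt 2 * 2^s * Real.exp ((1-d^2)/(8*s))) * ((s:ℝ) - j) := by
              apply mul_le_mul_of_nonneg_right ihs hsj0
          _ ≤ (Real.sqrt 2 * 2^s * Real.exp ((1-d^2)/(8*s))) * (((j:ℝ)+1) * Real.exp (-(d+1)/(2*s))) := by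
              apply mul_le_mul_of_nonneg_left hratio (by positivity)
          _ = Real.sqrt 2 * 2^s * (Real.exp ((1-d^2)/(8*s)) * Real.exp (-(d+1)/(2*s))) * ((j:ℝ)+1) := by ring
          _ = Real.sqrt 2 * 2^s * Real.exp ((1 - (d+2)^2)/(8*s)) * ((j:ℝ)+1) := by rw [hXY]
      have hjpos : (0:ℝ) < (j:ℝ) + 1 := by positivity
      have := le_of_mul_le_mul_right (by exact hfinal) hjpos
      rw [hd2]
      exact this

lemma choose_gauss (s j : ℕ) :
    (s.choose j : ℝ) * Real.sqrt (s+1) ≤ 3 * 2^s * Real.exp (-(2*(j:ℝ)-s)^2/(8*s)) := by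
  have sqrt2_le : Real.sqrt 2 ≤ 3/2 := by
    rw [show (3:ℝ)/2 = Real.sqrt ((3/2)^2) from (Real.sqrt_sq (by norm_num)).symm]
    exact Real.sqrt_le_sqrt (by norm_num)
  have hconst : ∀ x : ℝ, Real.sqrt 2 * 2^s * Real.exp ((1 - x^2)/(8*s)) ≤ 3 * 2^s * Real.exp (-x^2/(8*s)) := by
    intro x
    rcases Nat.eq_zero_or_pos s with hs0 | hs1
    · subst hs0
      simp only [Nat.cast_zero, mul_zero]
      rw [div_zero, div_zero]
      simp [Real.exp_zero]
      linarith [sqrt2_le]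
    · have hsR : (1:ℝ) ≤ s := by exact_mod_cast hs1
      have hsplit : Real.exp ((1 - x^2)/(8*s)) = Real.exp (1/(8*s)) * Real.exp (-x^2/(8*s)) := by
        rw [← Real.exp_add]
        congr 1
        field_simp
        ring
      have h18 : Real.exp (1/(8*(s:ℝ))) ≤ 8/7 := by
        have h1 : (7:ℝ)/8 ≤ Real.exp (-(1/8)) := by
          have := Real.add_one_le_exp (-(1/8):ℝ)
          linarith
        have h2 : Real.exp (1/(8*(s:ℝ))) ≤ Real.exp (1/8) := by
          apply Real.exp_le_exp.mpr
          rw [div_le_div_iff₀ (by linarith) (by norm_num)]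
          linarith
        have h3 : Real.exp (1/8) * Real.exp (-(1/8)) = 1 := by
          rw [← Real.exp_add]; norm_num
        have h4 : Real.exp ((1:ℝ)/8) ≤ 8/7 := by
          nlinarith [Real.exp_pos (-(1/8):ℝ), Real.exp_pos ((1:ℝ)/8)]
        exact h2.trans h4
      rw [hsplit]
      have e2 : (0:ℝ) < Real.exp (-x^2/(8*s)) := Real.exp_pos _
      have p2 : (0:ℝ) < (2:ℝ)^s := pow_pos (by norm_num) s
      calc Real.sqrt 2 * 2^s * (Real.exp (1/(8*(s:ℝ))) * Real.exp (-x^2/(8*s)))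
          ≤ (3/2) * 2^s * ((8/7) * Real.exp (-x^2/(8*s))) := by
            apply mul_le_mul
            · apply mul_le_mul_of_nonneg_right sqrt2_le (le_of_lt p2)
            · apply mul_le_mul_of_nonneg_right h18 (le_of_lt e2)
            · positivity
            · positivity
        _ ≤ 3 * 2^s * Real.exp (-x^2/(8*s)) := by nlinarith
  by_cases hjs : s < j
  · rw [Nat.choose_eq_zero_of_lt hjs]
    simp only [Nat.cast_zero, zero_mul]
    positivity
  · push_neg at hjs
    by_cases h2j : s ≤ 2*j
    · have hjge : (s+1)/2 ≤ j := by omega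
      have := gauss_aux s (j - (s+1)/2)
      rw [show (s+1)/2 + (j - (s+1)/2) = j by omega] at this
      exact this.trans (hconst _)
    · push_neg at h2j
      have hsymm : s.choose j = s.choose (s - j) := by
        rw [← Nat.choose_symm hjs]
      have hjge : (s+1)/2 ≤ s - j := by omega
      have := gauss_aux s ((s-j) - (s+1)/2)
      rw [show (s+1)/2 + ((s-j) - (s+1)/2) = s - j by omega] at this
      rw [hsymm]
      have hcast : (2*(((s-j:ℕ)):ℝ) - s)^2 = (2*(j:ℝ) - s)^2 := by
        rw [Nat.cast_sub (by omega : j ≤ s)]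
        ring
      rw [hcast] at this
      exact this.trans (hconst _)

lemma dist_cast (a b : ℕ) : ((Nat.dist a b : ℕ) : ℝ) = |(a:ℝ) - b| := by
  rcases le_total a b with h | h
  · rw [Nat.dist_eq_sub_of_le h, Nat.cast_sub h, abs_sub_comm, abs_of_nonneg]
    have : (a:ℝ) ≤ b := by exact_mod_cast h
    linarith
  · rw [Nat.dist_eq_sub_of_le_right h, Nat.cast_sub h, abs_of_nonneg]
    have : (b:ℝ) ≤ a := by exact_mod_cast h
    linarith

lemma gauss_exp_le {x a : ℝ} (ha : 0 < a) :
    Real.exp (-x^2/a) ≤ Real.exp 1 * Real.exp (-(|x|/Real.sqrt a)) := by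
  rw [← Real.exp_add]
  apply Real.exp_le_exp.mpr
  have h1 : x^2/a = (|x|/Real.sqrt a)^2 := by
    rw [div_pow, sq_abs, Real.sq_sqrt ha.le]
  set y := |x|/Real.sqrt a with hy
  have hy0 : 0 ≤ y := by positivity
  rw [neg_div, h1]
  nlinarith [sq_nonneg (y-1)]

-- q-bound : exp(-c) < 1 etc.
lemma expq0 (c : ℝ) : 0 ≤ Real.exp (-c) := (Real.exp_pos _).le
lemma expq1 {c : ℝ} (hc : 0 < c) : Real.exp (-c) < 1 :=
  Real.exp_lt_one_iff.mpr (by linarith)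

/-- Gaussian sum over range N with dist-based decay. -/
lemma sum_exp_dist_le {c : ℝ} (hc : 0 < c) (k N : ℕ) :
    ∑ l ∈ range N, Real.exp (-((Nat.dist l k : ℕ) : ℝ) * c) ≤ 2 * (1 + 1/c) := by
  have h : ∀ l, Real.exp (-((Nat.dist l k : ℕ) : ℝ) * c) = (Real.exp (-c)) ^ (Nat.dist l k) := by
    intro l
    rw [← Real.exp_nat_mul]
    congr 1
    ring
  calc ∑ l ∈ range N, Real.exp (-((Nat.dist l k : ℕ) : ℝ) * c)
      = ∑ l ∈ range N, (Real.exp (-c)) ^ (Nat.dist l k) := by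
        apply Finset.sum_congr rfl; intro l _; exact h l
    _ ≤ 2 / (1 - Real.exp (-c)) := sum_pow_dist (expq0 c) (expq1 hc) k N
    _ = 2 * (1 / (1 - Real.exp (-c))) := by ring
    _ ≤ 2 * (1 + 1/c) := by
        apply mul_le_mul_of_nonneg_left (one_sub_exp_inv hc) (by norm_num)

/-- The sum `Σ_{m ≤ s} exp(-(2m-s)²/(16s)) ≤ 40 √(s+1)`. -/
lemma gauss_sum_m (s : ℕ) :
    ∑ m ∈ range (s+1), Real.exp (-(2*(m:ℝ)-s)^2/(16*s)) ≤ 40 * Real.sqrt (s+1) := by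
  rcases Nat.eq_zero_or_pos s with hs0 | hs1
  · subst hs0
    rw [Finset.range_one, Finset.sum_singleton]
    have e1 : -(2*((0:ℕ):ℝ)-((0:ℕ):ℝ))^2/(16*((0:ℕ):ℝ)) = 0 := by norm_num
    push_cast at e1 ⊢
    rw [e1, Real.exp_zero]
    rw [show ((0:ℝ)+1) = 1 by norm_num, Real.sqrt_one]
    norm_num
  · have hsR : (1:ℝ) ≤ s := by exact_mod_cast hs1
    have hsqs : (1:ℝ) ≤ Real.sqrt s := by
      rw [show (1:ℝ) = Real.sqrt 1 from Real.sqrt_one.symm]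
      exact Real.sqrt_le_sqrt hsR
    have hsqpos : (0:ℝ) < Real.sqrt s := by linarith
    set c : ℝ := 1/(4*Real.sqrt s) with hc
    have hcpos : 0 < c := by positivity
    set q : ℝ := Real.exp (-c) with hq
    have hq0 : 0 ≤ q := expq0 c
    have hq1 : q < 1 := expq1 hcpos
    -- pointwise bound
    have hqne : q ≠ 0 := by rw [hq]; exact (Real.exp_pos _).ne'
    have hpt : ∀ m : ℕ, Real.exp (-(2*(m:ℝ)-s)^2/(16*s)) ≤ Real.exp 1 * (q ^ (Nat.dist (2*m) s + 1)) / q := by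
      intro m
      have ha : (0:ℝ) < 16*s := by linarith
      have h1 := gauss_exp_le (x := 2*(m:ℝ)-s) ha
      have h2 : Real.sqrt (16*(s:ℝ)) = 4 * Real.sqrt s := by
        rw [show (16:ℝ)*(s:ℝ) = 4^2 * s by norm_num, Real.sqrt_mul (by positivity), Real.sqrt_sq (by norm_num)]
      have h3 : |2*(m:ℝ)-s| = ((Nat.dist (2*m) s : ℕ) : ℝ) := by
        rw [dist_cast]; push_cast; ring_nf
      have h4 : Real.exp (-(|2*(m:ℝ)-s|/Real.sqrt (16*s))) = q ^ (Nat.dist (2*m) s) := by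
        rw [h3, h2, ← Real.exp_nat_mul]
        congr 1
        rw [hc]
        field_simp
      have h5 : Real.exp 1 * q ^ (Nat.dist (2*m) s) = Real.exp 1 * (q ^ (Nat.dist (2*m) s + 1)) / q := by
        rw [pow_succ]
        field_simp
      calc Real.exp (-(2*(m:ℝ)-s)^2/(16*s)) ≤ Real.exp 1 * Real.exp (-(|2*(m:ℝ)-s|/Real.sqrt (16*s))) := h1
        _ = Real.exp 1 * q ^ (Nat.dist (2*m) s) := by rw [h4]
        _ = Real.exp 1 * (q ^ (Nat.dist (2*m) s + 1)) / q := h5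
    -- dist comparison
    have hdist : ∀ m : ℕ, q ^ (Nat.dist (2*m) s + 1) ≤ q ^ (Nat.dist m (s/2)) := by
      intro m
      apply pow_le_pow_of_le_one hq0 (le_of_lt hq1)
      have h1 : 2 * Nat.dist m (s/2) = Nat.dist (2*m) (2*(s/2)) := by
        rw [Nat.dist_mul_left]
      have h2 : Nat.dist (2*m) (2*(s/2)) ≤ Nat.dist (2*m) s + Nat.dist s (2*(s/2)) :=
        Nat.dist.triangle_inequality _ _ _
      have h3 : Nat.dist s (2*(s/2)) ≤ 1 := by
        rcases Nat.even_or_odd s with ⟨t, ht⟩ | ⟨t, ht⟩ <;>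
          simp [ht, Nat.dist] <;> omega
      omega
    calc ∑ m ∈ range (s+1), Real.exp (-(2*(m:ℝ)-s)^2/(16*s))
        ≤ ∑ m ∈ range (s+1), Real.exp 1 * (q ^ (Nat.dist (2*m) s + 1)) / q := by
          apply Finset.sum_le_sum; intro m _; exact hpt m
      _ ≤ ∑ m ∈ range (s+1), Real.exp 1 * (q ^ (Nat.dist m (s/2))) / q := by
          apply Finset.sum_le_sum; intro m _
          have hqpos : (0:ℝ) < q := by rw [hq]; exact Real.exp_pos _
          rw [div_le_div_iff_of_pos_right hqpos]
          exact mul_le_mul_of_nonneg_left (hdist m) (Real.exp_pos 1).le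
      _ = (Real.exp 1 / q) * ∑ m ∈ range (s+1), q ^ (Nat.dist m (s/2)) := by
          rw [Finset.mul_sum]
          apply Finset.sum_congr rfl; intro m _; ring
      _ ≤ (Real.exp 1 / q) * (2 / (1 - q)) := by
          apply mul_le_mul_of_nonneg_left (sum_pow_dist hq0 hq1 _ _) (by positivity)
      _ ≤ 40 * Real.sqrt (s+1) := by
          have hqinv : Real.exp 1 / q = Real.exp 1 * Real.exp c := by
            rw [hq, Real.exp_neg]; field_simp
          have hcbd : c ≤ 1/4 := by
            rw [hc]
            rw [div_le_div_iff₀ (by positivity) (by norm_num)]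
            linarith
          have hec : Real.exp c ≤ Real.exp (1/4) := Real.exp_le_exp.mpr hcbd
          have he14 : Real.exp ((1:ℝ)/4) ≤ 4/3 := by
            nlinarith [Real.add_one_le_exp (-(1/4):ℝ), Real.exp_pos (-(1/4):ℝ), Real.exp_pos ((1:ℝ)/4),
              (by rw [← Real.exp_add]; norm_num : Real.exp ((1:ℝ)/4) * Real.exp (-(1/4):ℝ) = 1)]
          have he1 : Real.exp 1 ≤ 2.7182818286 := (Real.exp_one_lt_d9).le
          have hgeo : 2 / (1 - q) ≤ 2 * (1 + 4 * Real.sqrt s) := by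
            have := one_sub_exp_inv hcpos
            have h1c : 1/c = 4 * Real.sqrt s := by rw [hc]; field_simp
            rw [hq]
            calc 2 / (1 - Real.exp (-c)) = 2 * (1/(1 - Real.exp (-c))) := by ring
              _ ≤ 2 * (1 + 1/c) := by
                  apply mul_le_mul_of_nonneg_left this (by norm_num)
              _ = 2 * (1 + 4 * Real.sqrt s) := by rw [h1c]
          have hsq1 : Real.sqrt s ≤ Real.sqrt (s+1) := Real.sqrt_le_sqrt (by linarith)
          have hq2 : (0:ℝ) < 2/(1-q) := div_pos (by norm_num) (by linarith)
          calc (Real.exp 1 / q) * (2 / (1 - q))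
              ≤ (2.7182818286 * (4/3)) * (2 * (1 + 4*Real.sqrt s)) := by
                apply mul_le_mul _ hgeo (le_of_lt hq2) (by positivity)
                rw [hqinv]
                apply mul_le_mul he1 (hec.trans he14) (Real.exp_pos _).le (by norm_num)
            _ ≤ (2.7182818286 * (4/3)) * (2 * (5 * Real.sqrt (s+1))) := by
                apply mul_le_mul_of_nonneg_left _ (by norm_num)
                apply mul_le_mul_of_nonneg_left _ (by norm_num)
                have : (1:ℝ) ≤ Real.sqrt (s+1) := hsqs.trans hsq1
                nlinarith
            _ ≤ 40 * Real.sqrt (s+1) := by nlinarith [Real.sqrt_nonneg ((s:ℝ)+1)]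

lemma dist_half (m s : ℕ) : Nat.dist m (s/2) ≤ Nat.dist (2*m) s + 1 := by
  have h1 : 2 * Nat.dist m (s/2) = Nat.dist (2*m) (2*(s/2)) := by
    rw [Nat.dist_mul_left]
  have h2 : Nat.dist (2*m) (2*(s/2)) ≤ Nat.dist (2*m) s + Nat.dist s (2*(s/2)) :=
    Nat.dist.triangle_inequality _ _ _
  have h3 : Nat.dist s (2*(s/2)) ≤ 1 := by
    have hle : 2*(s/2) ≤ s := by omega
    rw [Nat.dist_eq_sub_of_le_right hle]
    omega
  omega

/-- Sum of `q^{dist(2m,s)}`-type terms. -/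
lemma sum_q_dist2 {q : ℝ} (h0 : 0 < q) (h1 : q < 1) (s N : ℕ) :
    ∑ m ∈ range N, q ^ (Nat.dist (2*m) s) ≤ (1/q) * (2 / (1 - q)) := by
  have hpt : ∀ m : ℕ, q ^ (Nat.dist (2*m) s) ≤ q ^ (Nat.dist m (s/2)) / q := by
    intro m
    rw [le_div_iff₀ h0, ← pow_succ]
    exact pow_le_pow_of_le_one h0.le h1.le (dist_half m s)
  calc ∑ m ∈ range N, q ^ (Nat.dist (2*m) s)
      ≤ ∑ m ∈ range N, q ^ (Nat.dist m (s/2)) / q := Finset.sum_le_sum (fun m _ => hpt m)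
    _ = (1/q) * ∑ m ∈ range N, q ^ (Nat.dist m (s/2)) := by
        rw [Finset.mul_sum]; apply Finset.sum_congr rfl; intro m _; ring
    _ ≤ (1/q) * (2 / (1 - q)) := by
        apply mul_le_mul_of_nonneg_left (sum_pow_dist h0.le h1 _ _) (by positivity)

lemma rpow_half_cancel (s : ℕ) : ((1:ℝ)+s)^(-(1/2):ℝ) * Real.sqrt ((s:ℝ)+1) = 1 := by
  have h1 : Real.sqrt ((s:ℝ)+1) = ((1:ℝ)+s)^((1/2):ℝ) := by
    rw [show ((s:ℝ)+1) = (1:ℝ)+s by ring, Real.sqrt_eq_rpow]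
  rw [h1, ← Real.rpow_add (by positivity)]
  norm_num

/-- Inner sum bound: `Σ_{m≤s} exp(-(2m-s)²/16s) ((1+m)(1+s-m))^{-1/4} ≤ 200`. -/
lemma inner_sum_le (s : ℕ) :
    ∑ m ∈ range (s+1),
      Real.exp (-(2*(m:ℝ)-s)^2/(16*s)) * ((1+(m:ℝ))*(1+((s-m : ℕ):ℝ)))^(-(1/4):ℝ) ≤ 200 := by
  set q : ℝ := Real.exp (-(1/32)) with hq
  have hq0 : (0:ℝ) < q := Real.exp_pos _
  have hq1 : q < 1 := Real.exp_lt_one_iff.mpr (by norm_num)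
  have key : ∀ m ∈ range (s+1),
      Real.exp (-(2*(m:ℝ)-s)^2/(16*s)) * ((1+(m:ℝ))*(1+((s-m : ℕ):ℝ)))^(-(1/4):ℝ)
        ≤ 2*((1:ℝ)+s)^(-(1/2):ℝ) * Real.exp (-(2*(m:ℝ)-s)^2/(16*s)) + q ^ (Nat.dist (2*m) s) := by
    intro m hm
    rw [Finset.mem_range] at hm
    have hms : m ≤ s := by omega
    have hncast : ((s - m : ℕ) : ℝ) = (s:ℝ) - m := by
      rw [Nat.cast_sub hms]
    have hX1 : (1:ℝ) ≤ (1+(m:ℝ))*(1+((s-m : ℕ):ℝ)) := by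
      rw [hncast]
      have h1 : (m:ℝ) ≤ s := by exact_mod_cast hms
      nlinarith [Nat.cast_nonneg (α := ℝ) m]
    have hXpos : (0:ℝ) < (1+(m:ℝ))*(1+((s-m : ℕ):ℝ)) := by linarith
    have hdcast : ((Nat.dist (2*m) s : ℕ) : ℝ) = |2*(m:ℝ) - s| := by
      rw [dist_cast]; push_cast; ring_nf
    have hexp0 : (0:ℝ) < Real.exp (-(2*(m:ℝ)-s)^2/(16*s)) := Real.exp_pos _
    by_cases hcase : 2 * Nat.dist (2*m) s ≤ s
    · -- central case
      have hdle : 2 * |2*(m:ℝ) - s| ≤ s := by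
        rw [← hdcast]
        exact_mod_cast hcase
      have habs1 : 2*(m:ℝ) - s ≤ |2*(m:ℝ) - s| := le_abs_self _
      have habs2 : -(|2*(m:ℝ) - s|) ≤ 2*(m:ℝ) - s := neg_abs_le _
      have hm4 : (s:ℝ)/4 ≤ (m:ℝ) := by linarith
      have hm34 : (m:ℝ) ≤ 3*(s:ℝ)/4 := by linarith
      have hXge : ((1:ℝ)+s)^2/8 ≤ (1+(m:ℝ))*(1+((s-m : ℕ):ℝ)) := by
        rw [hncast]
        nlinarith [mul_nonneg (by linarith : (0:ℝ) ≤ (m:ℝ) - s/4) (by linarith : (0:ℝ) ≤ 3*(s:ℝ)/4 - m)]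
      have h8pos : (0:ℝ) < ((1:ℝ)+s)^2/8 := by positivity
      have hrp : ((1+(m:ℝ))*(1+((s-m : ℕ):ℝ)))^(-(1/4):ℝ) ≤ (((1:ℝ)+s)^2/8)^(-(1/4):ℝ) :=
        Real.rpow_le_rpow_of_nonpos h8pos hXge (by norm_num)
      have hval : (((1:ℝ)+s)^2/8)^(-(1/4):ℝ) ≤ 2 * ((1:ℝ)+s)^(-(1/2):ℝ) := by
        have e1 : (((1:ℝ)+s)^2/8)^(-(1/4):ℝ) = (((1:ℝ)+s)^2)^(-(1/4):ℝ) / (8:ℝ)^(-(1/4):ℝ) := by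
          rw [Real.div_rpow (by positivity) (by norm_num)]
        have e2 : (((1:ℝ)+s)^2)^(-(1/4):ℝ) = ((1:ℝ)+s)^(-(1/2):ℝ) := by
          rw [← Real.rpow_natCast ((1:ℝ)+s) 2, ← Real.rpow_mul (by positivity)]
          norm_num
        have e3 : (1:ℝ) / (8:ℝ)^(-(1/4):ℝ) = (8:ℝ)^((1/4):ℝ) := by
          rw [Real.rpow_neg (by norm_num)]
          field_simp
        have e4 : (8:ℝ)^((1/4):ℝ) ≤ 2 := by
          have h16 : ((16:ℝ))^((1/4):ℝ) = 2 := by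
            rw [show (16:ℝ) = 2^(4:ℕ) by norm_num, ← Real.rpow_natCast 2 4, ← Real.rpow_mul (by norm_num)]
            norm_num
          rw [← h16]
          exact Real.rpow_le_rpow (by norm_num) (by norm_num) (by norm_num)
        rw [e1, e2]
        have h5 : (0:ℝ) ≤ ((1:ℝ)+s)^(-(1/2):ℝ) := by positivity
        calc ((1:ℝ)+s)^(-(1/2):ℝ) / (8:ℝ)^(-(1/4):ℝ)
            = ((1:ℝ)+s)^(-(1/2):ℝ) * ((8:ℝ)^((1/4):ℝ)) := by
              rw [div_eq_mul_inv, ← Real.rpow_neg (by norm_num)]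
              norm_num
          _ ≤ ((1:ℝ)+s)^(-(1/2):ℝ) * 2 := mul_le_mul_of_nonneg_left e4 h5
          _ = 2 * ((1:ℝ)+s)^(-(1/2):ℝ) := by ring
      have : Real.exp (-(2*(m:ℝ)-s)^2/(16*s)) * ((1+(m:ℝ))*(1+((s-m : ℕ):ℝ)))^(-(1/4):ℝ)
          ≤ 2*((1:ℝ)+s)^(-(1/2):ℝ) * Real.exp (-(2*(m:ℝ)-s)^2/(16*s)) := by
        calc Real.exp (-(2*(m:ℝ)-s)^2/(16*s)) * ((1+(m:ℝ))*(1+((s-m : ℕ):ℝ)))^(-(1/4):ℝ)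
            ≤ Real.exp (-(2*(m:ℝ)-s)^2/(16*s)) * (2 * ((1:ℝ)+s)^(-(1/2):ℝ)) :=
              mul_le_mul_of_nonneg_left (hrp.trans hval) hexp0.le
          _ = 2*((1:ℝ)+s)^(-(1/2):ℝ) * Real.exp (-(2*(m:ℝ)-s)^2/(16*s)) := by ring
      have hqpow : (0:ℝ) ≤ q ^ (Nat.dist (2*m) s) := by positivity
      linarith
    · -- tail case
      push_neg at hcase
      have hs1 : 1 ≤ s := by
        by_contra h
        push_neg at h
        interval_cases s
        interval_cases m
        simp [Nat.dist] at hcase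
      have hsR : (1:ℝ) ≤ (s:ℝ) := by exact_mod_cast hs1
      have hd1 : (s:ℝ) < 2 * ((Nat.dist (2*m) s : ℕ):ℝ) := by exact_mod_cast hcase
      have hexple : Real.exp (-(2*(m:ℝ)-s)^2/(16*s)) ≤ q ^ (Nat.dist (2*m) s) := by
        rw [hq, ← Real.exp_nat_mul]
        apply Real.exp_le_exp.mpr
        have hD0 : (0:ℝ) ≤ ((Nat.dist (2*m) s : ℕ):ℝ) := Nat.cast_nonneg _
        have hsq : (2*(m:ℝ)-s)^2 = ((Nat.dist (2*m) s : ℕ):ℝ)^2 := by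
          rw [hdcast, sq_abs]
        rw [hsq, neg_div, mul_neg, neg_le_neg_iff, mul_one_div]
        have hspos : (0:ℝ) < 16*(s:ℝ) := by linarith
        rw [div_le_div_iff₀ (by norm_num) hspos]
        nlinarith
      have hrp1 : ((1+(m:ℝ))*(1+((s-m : ℕ):ℝ)))^(-(1/4):ℝ) ≤ 1 :=
        Real.rpow_le_one_of_one_le_of_nonpos hX1 (by norm_num)
      have h2 : (0:ℝ) ≤ 2*((1:ℝ)+s)^(-(1/2):ℝ) * Real.exp (-(2*(m:ℝ)-s)^2/(16*s)) := by positivity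
      calc Real.exp (-(2*(m:ℝ)-s)^2/(16*s)) * ((1+(m:ℝ))*(1+((s-m : ℕ):ℝ)))^(-(1/4):ℝ)
          ≤ Real.exp (-(2*(m:ℝ)-s)^2/(16*s)) * 1 := mul_le_mul_of_nonneg_left hrp1 hexp0.le
        _ = Real.exp (-(2*(m:ℝ)-s)^2/(16*s)) := mul_one _
        _ ≤ q ^ (Nat.dist (2*m) s) := hexple
        _ ≤ 2*((1:ℝ)+s)^(-(1/2):ℝ) * Real.exp (-(2*(m:ℝ)-s)^2/(16*s)) + q ^ (Nat.dist (2*m) s) := by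
            linarith
  calc ∑ m ∈ range (s+1),
      Real.exp (-(2*(m:ℝ)-s)^2/(16*s)) * ((1+(m:ℝ))*(1+((s-m : ℕ):ℝ)))^(-(1/4):ℝ)
      ≤ ∑ m ∈ range (s+1), (2*((1:ℝ)+s)^(-(1/2):ℝ) * Real.exp (-(2*(m:ℝ)-s)^2/(16*s)) + q ^ (Nat.dist (2*m) s)) :=
        Finset.sum_le_sum key
    _ = 2*((1:ℝ)+s)^(-(1/2):ℝ) * (∑ m ∈ range (s+1), Real.exp (-(2*(m:ℝ)-s)^2/(16*s)))
        + ∑ m ∈ range (s+1), q ^ (Nat.dist (2*m) s) := by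
        rw [Finset.sum_add_distrib, Finset.mul_sum]
    _ ≤ 2*((1:ℝ)+s)^(-(1/2):ℝ) * (40 * Real.sqrt (s+1)) + (1/q) * (2/(1-q)) := by
        apply add_le_add
        · exact mul_le_mul_of_nonneg_left (gauss_sum_m s) (by positivity)
        · exact sum_q_dist2 hq0 hq1 s (s+1)
    _ ≤ 200 := by
        have h1 : 2*((1:ℝ)+s)^(-(1/2):ℝ) * (40 * Real.sqrt (s+1)) = 80 := by
          have := rpow_half_cancel s
          nlinarith [this]
        have h2 : (1/q) * (2/(1-q)) ≤ 120 := by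
          have hgeo : 2/(1-q) ≤ 2 * (1+32) := by
            have := one_sub_exp_inv (show (0:ℝ) < 1/32 by norm_num)
            rw [hq]
            calc 2 / (1 - Real.exp (-(1/32))) = 2 * (1/(1 - Real.exp (-(1/32)))) := by ring
              _ ≤ 2 * (1 + 1/(1/32)) := mul_le_mul_of_nonneg_left this (by norm_num)
              _ = 2 * (1+32) := by norm_num
          have hqinv : 1/q ≤ 32/31 := by
            rw [hq, Real.exp_neg, one_div, inv_inv]
            have h1 : (31:ℝ)/32 ≤ Real.exp (-(1/32)) := by
              have := Real.add_one_le_exp (-(1/32):ℝ)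
              linarith
            have h2 : Real.exp ((1:ℝ)/32) * Real.exp (-(1/32)) = 1 := by
              rw [← Real.exp_add]; norm_num
            nlinarith [Real.exp_pos ((1:ℝ)/32)]
          have hgeo0 : (0:ℝ) < 2/(1-q) := div_pos (by norm_num) (by linarith)
          calc (1/q) * (2/(1-q)) ≤ (32/31) * (2 * (1+32)) := by
                apply mul_le_mul hqinv hgeo (le_of_lt hgeo0) (by norm_num)
            _ ≤ 120 := by norm_num
        linarith

lemma rpow_neg_half_le_one (l : ℕ) : ((1:ℝ)+l)^(-(1/2):ℝ) ≤ 1 :=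
  Real.rpow_le_one_of_one_le_of_nonpos (by have := Nat.cast_nonneg (α := ℝ) l; linarith) (by norm_num)

lemma exp_le_geo {c : ℝ} (hc : 0 < c) (k : ℝ) (hk : 0 ≤ k) : Real.exp (-k*c) ≤ 1 := by
  rw [Real.exp_le_one_iff]
  nlinarith

/-- Outer sum bound. -/
lemma outer_sum_le (k N : ℕ) :
    ∑ l ∈ range N, ((1:ℝ)+l)^(-(1/2):ℝ) * Real.exp (-((k:ℝ)-l)^2/(16*((k:ℝ)+l))) ≤ 200 := by
  rcases Nat.eq_zero_or_pos k with hk0 | hk1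
  · -- k = 0
    subst hk0
    set q : ℝ := Real.exp (-(1/16)) with hq
    have hq0 : (0:ℝ) ≤ q := (Real.exp_pos _).le
    have hq1 : q < 1 := Real.exp_lt_one_iff.mpr (by norm_num)
    have hpt : ∀ l : ℕ, ((1:ℝ)+l)^(-(1/2):ℝ) * Real.exp (-(((0:ℕ):ℝ)-l)^2/(16*(((0:ℕ):ℝ)+l))) ≤ q ^ l := by
      intro l
      have h1 := rpow_neg_half_le_one l
      have hexp : Real.exp (-(((0:ℕ):ℝ)-l)^2/(16*(((0:ℕ):ℝ)+l))) ≤ q ^ l := by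
        rw [hq, ← Real.exp_nat_mul]
        apply Real.exp_le_exp.mpr
        rcases Nat.eq_zero_or_pos l with hl0 | hl1
        · subst hl0; norm_num
        · have hlR : (1:ℝ) ≤ l := by exact_mod_cast hl1
          have e1 : (((0:ℕ):ℝ)-l)^2 = (l:ℝ)^2 := by push_cast; ring
          have e2 : 16*(((0:ℕ):ℝ)+l) = 16*(l:ℝ) := by push_cast; ring
          rw [e1, e2, neg_div, mul_neg, neg_le_neg_iff, mul_one_div]
          rw [div_le_div_iff₀ (by norm_num) (by linarith)]
          nlinarith
      calc ((1:ℝ)+l)^(-(1/2):ℝ) * Real.exp (-(((0:ℕ):ℝ)-l)^2/(16*(((0:ℕ):ℝ)+l)))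
          ≤ 1 * Real.exp (-(((0:ℕ):ℝ)-l)^2/(16*(((0:ℕ):ℝ)+l))) := by
            apply mul_le_mul_of_nonneg_right h1 (Real.exp_pos _).le
        _ = Real.exp (-(((0:ℕ):ℝ)-l)^2/(16*(((0:ℕ):ℝ)+l))) := one_mul _
        _ ≤ q ^ l := hexp
    calc ∑ l ∈ range N, ((1:ℝ)+l)^(-(1/2):ℝ) * Real.exp (-(((0:ℕ):ℝ)-l)^2/(16*(((0:ℕ):ℝ)+l)))
        ≤ ∑ l ∈ range N, q ^ l := Finset.sum_le_sum (fun l _ => hpt l)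
      _ ≤ 1/(1-q) := geo_le hq0 hq1 N
      _ ≤ 200 := by
          have := one_sub_exp_inv (show (0:ℝ) < 1/16 by norm_num)
          rw [hq]
          calc 1/(1 - Real.exp (-(1/16))) ≤ 1 + 1/(1/16) := this
            _ ≤ 200 := by norm_num
  · -- k ≥ 1
    have hkR : (1:ℝ) ≤ k := by exact_mod_cast hk1
    have hsq80 : (0:ℝ) < Real.sqrt (80*k) := Real.sqrt_pos.mpr (by linarith)
    set c : ℝ := 1/Real.sqrt (80*k) with hc
    have hcpos : 0 < c := by positivity
    set qB : ℝ := Real.exp (-c) with hqB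
    have hqB0 : (0:ℝ) ≤ qB := (Real.exp_pos _).le
    have hqB1 : qB < 1 := Real.exp_lt_one_iff.mpr (by linarith)
    set qC : ℝ := Real.exp (-(1/36)) with hqC
    have hqC0 : (0:ℝ) ≤ qC := (Real.exp_pos _).le
    have hqC1 : qC < 1 := Real.exp_lt_one_iff.mpr (by norm_num)
    set EB : ℝ := Real.sqrt 2 * ((1:ℝ)+k)^(-(1/2):ℝ) * Real.exp 1 with hEB
    have hEB0 : 0 ≤ EB := by rw [hEB]; positivity
    have hpt : ∀ l ∈ range N, ((1:ℝ)+l)^(-(1/2):ℝ) * Real.exp (-((k:ℝ)-l)^2/(16*((k:ℝ)+l)))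
        ≤ (if 2*l ≤ k then Real.exp (-(k:ℝ)/96) else 0)
          + EB * qB ^ (Nat.dist l k) + qC ^ l := by
      intro l _
      have hl0 : (0:ℝ) ≤ l := Nat.cast_nonneg _
      have hterm0 : (0:ℝ) < Real.exp (-((k:ℝ)-l)^2/(16*((k:ℝ)+l))) := Real.exp_pos _
      have hB0 : (0:ℝ) ≤ EB * qB ^ (Nat.dist l k) := by positivity
      have hC0 : (0:ℝ) ≤ qC ^ l := by positivity
      by_cases hA : 2*l ≤ k
      · -- case A
        rw [if_pos hA]
        have hlk : 2*(l:ℝ) ≤ k := by exact_mod_cast hA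
        have hexp : Real.exp (-((k:ℝ)-l)^2/(16*((k:ℝ)+l))) ≤ Real.exp (-(k:ℝ)/96) := by
          apply Real.exp_le_exp.mpr
          rw [neg_div, neg_div, neg_le_neg_iff]
          rw [div_le_div_iff₀ (by norm_num) (by nlinarith)]
          nlinarith [mul_nonneg (by linarith : (0:ℝ) ≤ (k:ℝ) - 2*l) (by linarith : (0:ℝ) ≤ 80*(k:ℝ) - 48*l)]
        have h1 := rpow_neg_half_le_one l
        have : ((1:ℝ)+l)^(-(1/2):ℝ) * Real.exp (-((k:ℝ)-l)^2/(16*((k:ℝ)+l))) ≤ Real.exp (-(k:ℝ)/96) := by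
          calc ((1:ℝ)+l)^(-(1/2):ℝ) * Real.exp (-((k:ℝ)-l)^2/(16*((k:ℝ)+l)))
              ≤ 1 * Real.exp (-((k:ℝ)-l)^2/(16*((k:ℝ)+l))) := mul_le_mul_of_nonneg_right h1 hterm0.le
            _ = Real.exp (-((k:ℝ)-l)^2/(16*((k:ℝ)+l))) := one_mul _
            _ ≤ Real.exp (-(k:ℝ)/96) := hexp
        linarith
      · push_neg at hA
        rw [if_neg (by omega)]
        by_cases hB : l ≤ 4*k
        · -- case B
          have hlkR : (k:ℝ) < 2*l := by exact_mod_cast hA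
          have hl4k : (l:ℝ) ≤ 4*k := by exact_mod_cast hB
          have hw : ((1:ℝ)+l)^(-(1/2):ℝ) ≤ Real.sqrt 2 * ((1:ℝ)+k)^(-(1/2):ℝ) := by
            have hhalf : ((1:ℝ)+k)/2 ≤ 1+(l:ℝ) := by linarith
            have h2 : ((1:ℝ)+l)^(-(1/2):ℝ) ≤ (((1:ℝ)+k)/2)^(-(1/2):ℝ) :=
              Real.rpow_le_rpow_of_nonpos (by linarith) hhalf (by norm_num)
            have h3 : (((1:ℝ)+k)/2)^(-(1/2):ℝ) = Real.sqrt 2 * ((1:ℝ)+k)^(-(1/2):ℝ) := by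
              rw [Real.div_rpow (by linarith) (by norm_num)]
              rw [div_eq_mul_inv, ← Real.rpow_neg (by norm_num : (0:ℝ) ≤ 2)]
              rw [neg_neg, Real.sqrt_eq_rpow]
              ring
            rw [← h3]; exact h2
          have hexp1 : Real.exp (-((k:ℝ)-l)^2/(16*((k:ℝ)+l))) ≤ Real.exp (-((k:ℝ)-l)^2/(80*k)) := by
            apply Real.exp_le_exp.mpr
            rw [neg_div, neg_div, neg_le_neg_iff]
            rcases eq_or_lt_of_le (sq_nonneg ((k:ℝ)-l)) with he | hlt
            · rw [← he]; simp
            · rw [div_le_div_iff₀ (by linarith) (by nlinarith)]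
              nlinarith
          have hexp2 : Real.exp (-((k:ℝ)-l)^2/(80*k)) ≤ Real.exp 1 * qB ^ (Nat.dist l k) := by
            have h80 : (0:ℝ) < 80*k := by linarith
            have h1 := gauss_exp_le (x := (k:ℝ)-l) h80
            have h2 : |(k:ℝ)-l| = ((Nat.dist l k : ℕ):ℝ) := by
              rw [dist_cast, abs_sub_comm]
            have h3 : Real.exp (-(|(k:ℝ)-l|/Real.sqrt (80*k))) = qB ^ (Nat.dist l k) := by
              rw [h2, hqB, ← Real.exp_nat_mul]
              congr 1
              rw [hc]
              field_simp
            rw [← h3]; exact h1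
          have : ((1:ℝ)+l)^(-(1/2):ℝ) * Real.exp (-((k:ℝ)-l)^2/(16*((k:ℝ)+l)))
              ≤ EB * qB ^ (Nat.dist l k) := by
            rw [hEB]
            have e0 : (0:ℝ) ≤ ((1:ℝ)+l)^(-(1/2):ℝ) := by positivity
            calc ((1:ℝ)+l)^(-(1/2):ℝ) * Real.exp (-((k:ℝ)-l)^2/(16*((k:ℝ)+l)))
                ≤ (Real.sqrt 2 * ((1:ℝ)+k)^(-(1/2):ℝ)) * (Real.exp 1 * qB ^ (Nat.dist l k)) := by
                  apply mul_le_mul hw (hexp1.trans hexp2) hterm0.le (by positivity)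
              _ = Real.sqrt 2 * ((1:ℝ)+k)^(-(1/2):ℝ) * Real.exp 1 * qB ^ (Nat.dist l k) := by ring
          have hA0 : (0:ℝ) ≤ Real.exp (-(k:ℝ)/96) := (Real.exp_pos _).le
          linarith
        · -- case C
          push_neg at hB
          have h4k : 4*(k:ℝ) < l := by exact_mod_cast hB
          have hl1 : (1:ℝ) ≤ l := by
            have : 1 ≤ l := by omega
            exact_mod_cast this
          have hexp : Real.exp (-((k:ℝ)-l)^2/(16*((k:ℝ)+l))) ≤ qC ^ l := by
            rw [hqC, ← Real.exp_nat_mul]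
            apply Real.exp_le_exp.mpr
            rw [mul_neg, mul_one_div, neg_div, neg_le_neg_iff]
            rw [div_le_div_iff₀ (by norm_num) (by linarith : (0:ℝ) < 16*((k:ℝ)+l))]
            nlinarith [sq_nonneg ((l:ℝ)-4*k), mul_nonneg (by linarith : (0:ℝ) ≤ (k:ℝ)) (by linarith : (0:ℝ) ≤ 18*(l:ℝ)-71*k)]
          have h1 := rpow_neg_half_le_one l
          have : ((1:ℝ)+l)^(-(1/2):ℝ) * Real.exp (-((k:ℝ)-l)^2/(16*((k:ℝ)+l))) ≤ qC ^ l := by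
            calc ((1:ℝ)+l)^(-(1/2):ℝ) * Real.exp (-((k:ℝ)-l)^2/(16*((k:ℝ)+l)))
                ≤ 1 * Real.exp (-((k:ℝ)-l)^2/(16*((k:ℝ)+l))) := mul_le_mul_of_nonneg_right h1 hterm0.le
              _ = Real.exp (-((k:ℝ)-l)^2/(16*((k:ℝ)+l))) := one_mul _
              _ ≤ qC ^ l := hexp
          have hA0 : (0:ℝ) ≤ Real.exp (-(k:ℝ)/96) := (Real.exp_pos _).le
          linarith
    -- sum the three pieces
    have hsum : ∑ l ∈ range N, ((1:ℝ)+l)^(-(1/2):ℝ) * Real.exp (-((k:ℝ)-l)^2/(16*((k:ℝ)+l)))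
        ≤ (∑ l ∈ range N, if 2*l ≤ k then Real.exp (-(k:ℝ)/96) else 0)
          + (∑ l ∈ range N, EB * qB ^ (Nat.dist l k))
          + (∑ l ∈ range N, qC ^ l) := by
      calc ∑ l ∈ range N, ((1:ℝ)+l)^(-(1/2):ℝ) * Real.exp (-((k:ℝ)-l)^2/(16*((k:ℝ)+l)))
          ≤ ∑ l ∈ range N, ((if 2*l ≤ k then Real.exp (-(k:ℝ)/96) else 0)
              + EB * qB ^ (Nat.dist l k) + qC ^ l) := Finset.sum_le_sum hpt
        _ = _ := by rw [Finset.sum_add_distrib, Finset.sum_add_distrib]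
    -- Bound A-part
    have hA : (∑ l ∈ range N, if 2*l ≤ k then Real.exp (-(k:ℝ)/96) else 0) ≤ 48 := by
      rw [← Finset.sum_filter, Finset.sum_const, nsmul_eq_mul]
      have hcard : (((range N).filter (fun l => 2*l ≤ k)).card : ℝ) ≤ (k:ℝ)/2 + 1 := by
        have hsub : (range N).filter (fun l => 2*l ≤ k) ⊆ range (k/2+1) := by
          intro l hl
          simp only [Finset.mem_filter, Finset.mem_range] at hl ⊢
          omega
        have h1 : ((range N).filter (fun l => 2*l ≤ k)).card ≤ k/2 + 1 := by
          calc _ ≤ (range (k/2+1)).card := Finset.card_le_card hsub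
            _ = k/2+1 := Finset.card_range _
        have h2 : (((k/2 + 1 : ℕ)):ℝ) ≤ (k:ℝ)/2 + 1 := by
          have hnat : 2*(k/2) ≤ k := by omega
          have hR : 2*(((k/2:ℕ)):ℝ) ≤ (k:ℝ) := by exact_mod_cast hnat
          push_cast
          linarith
        calc (((range N).filter (fun l => 2*l ≤ k)).card : ℝ) ≤ ((k/2 + 1 : ℕ) : ℝ) := by
              exact_mod_cast h1
          _ ≤ (k:ℝ)/2 + 1 := h2
      have hexpb : Real.exp (-(k:ℝ)/96) ≤ 96/(96+(k:ℝ)) := by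
        have h1 : 1 + (k:ℝ)/96 ≤ Real.exp ((k:ℝ)/96) := by
          linarith [Real.add_one_le_exp ((k:ℝ)/96)]
        have h2 : Real.exp (-(k:ℝ)/96) * Real.exp ((k:ℝ)/96) = 1 := by
          rw [← Real.exp_add, show -(k:ℝ)/96 + (k:ℝ)/96 = 0 by ring, Real.exp_zero]
        have h3 : (0:ℝ) < 96 + (k:ℝ) := by linarith
        have h5 : Real.exp (-(k:ℝ)/96) * (1 + (k:ℝ)/96) ≤ 1 := by
          calc Real.exp (-(k:ℝ)/96) * (1 + (k:ℝ)/96)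
              ≤ Real.exp (-(k:ℝ)/96) * Real.exp ((k:ℝ)/96) :=
                mul_le_mul_of_nonneg_left h1 (Real.exp_pos _).le
            _ = 1 := h2
        rw [le_div_iff₀ h3]
        nlinarith [h5]
      have hexpb0 : (0:ℝ) ≤ Real.exp (-(k:ℝ)/96) := (Real.exp_pos _).le
      have h96 : (0:ℝ) < 96 + (k:ℝ) := by linarith
      calc (((range N).filter (fun l => 2*l ≤ k)).card : ℝ) * Real.exp (-(k:ℝ)/96)
          ≤ ((k:ℝ)/2 + 1) * (96/(96+(k:ℝ))) := by
            apply mul_le_mul hcard hexpb hexpb0 (by positivity)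
        _ ≤ 48 := by
            have e : ((k:ℝ)/2 + 1) * (96/(96+(k:ℝ))) = (48*((k:ℝ)+2))/(96+(k:ℝ)) := by
              field_simp
              ring
            rw [e, div_le_iff₀ h96]
            nlinarith
    -- Bound B-part
    have hB : (∑ l ∈ range N, EB * qB ^ (Nat.dist l k)) ≤ 77 := by
      rw [← Finset.mul_sum]
      have h1 : ∑ l ∈ range N, qB ^ (Nat.dist l k) ≤ 2/(1-qB) := sum_pow_dist hqB0 hqB1 k N
      have h1c : 1/c = Real.sqrt (80*(k:ℝ)) := by rw [hc]; field_simp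
      have h2 : 2/(1-qB) ≤ 2*(1 + Real.sqrt (80*(k:ℝ))) := by
        rw [hqB]
        calc 2/(1 - Real.exp (-c)) = 2 * (1/(1 - Real.exp (-c))) := by ring
          _ ≤ 2 * (1 + 1/c) := mul_le_mul_of_nonneg_left (one_sub_exp_inv hcpos) (by norm_num)
          _ = 2*(1 + Real.sqrt (80*(k:ℝ))) := by rw [h1c]
      have h3 : Real.sqrt (80*(k:ℝ)) ≤ 9 * Real.sqrt ((k:ℝ)+1) := by
        have e1 : (9:ℝ) * Real.sqrt ((k:ℝ)+1) = Real.sqrt (81*((k:ℝ)+1)) := by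
          rw [Real.sqrt_mul (by norm_num), show Real.sqrt (81:ℝ) = 9 by
            rw [show (81:ℝ) = 9^2 by norm_num, Real.sqrt_sq (by norm_num)]]
        rw [e1]
        apply Real.sqrt_le_sqrt
        linarith
      have h4 : (1:ℝ) ≤ Real.sqrt ((k:ℝ)+1) := by
        nlinarith [Real.sq_sqrt (show (0:ℝ) ≤ (k:ℝ)+1 by linarith), Real.sqrt_nonneg ((k:ℝ)+1)]
      have h5 : ∑ l ∈ range N, qB ^ (Nat.dist l k) ≤ 20 * Real.sqrt ((k:ℝ)+1) := by
        calc ∑ l ∈ range N, qB ^ (Nat.dist l k) ≤ 2/(1-qB) := h1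
          _ ≤ 2*(1 + Real.sqrt (80*(k:ℝ))) := h2
          _ ≤ 2*(Real.sqrt ((k:ℝ)+1) + 9*Real.sqrt ((k:ℝ)+1)) := by nlinarith
          _ = 20 * Real.sqrt ((k:ℝ)+1) := by ring
      have hs2 : Real.sqrt 2 ≤ 1.4143 := by
        rw [show (1.4143:ℝ) = Real.sqrt (1.4143^2) from (Real.sqrt_sq (by norm_num)).symm]
        exact Real.sqrt_le_sqrt (by norm_num)
      have he1 : Real.exp 1 ≤ 2.7182818286 := Real.exp_one_lt_d9.le
      have hsum0 : (0:ℝ) ≤ ∑ l ∈ range N, qB ^ (Nat.dist l k) := by positivity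
      have hcancel := rpow_half_cancel k
      calc EB * ∑ l ∈ range N, qB ^ (Nat.dist l k)
          ≤ EB * (20 * Real.sqrt ((k:ℝ)+1)) := mul_le_mul_of_nonneg_left h5 hEB0
        _ = 20 * (Real.sqrt 2 * Real.exp 1) * (((1:ℝ)+k)^(-(1/2):ℝ) * Real.sqrt ((k:ℝ)+1)) := by
            rw [hEB]; ring
        _ = 20 * (Real.sqrt 2 * Real.exp 1) := by rw [hcancel, mul_one]
        _ ≤ 77 := by nlinarith [Real.sqrt_nonneg (2:ℝ), (Real.exp_pos 1).le]
    -- Bound C-part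
    have hC : (∑ l ∈ range N, qC ^ l) ≤ 37 := by
      calc ∑ l ∈ range N, qC ^ l ≤ 1/(1-qC) := geo_le hqC0 hqC1 N
        _ ≤ 1 + 1/(1/36) := by rw [hqC]; exact one_sub_exp_inv (by norm_num)
        _ ≤ 37 := by norm_num
    calc ∑ l ∈ range N, ((1:ℝ)+l)^(-(1/2):ℝ) * Real.exp (-((k:ℝ)-l)^2/(16*((k:ℝ)+l)))
        ≤ _ := hsum
      _ ≤ 48 + 77 + 37 := by
          apply add_le_add (add_le_add hA hB) hC
      _ ≤ 200 := by norm_num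

lemma LLLcoef_nonneg (k l m n : ℕ) : 0 ≤ LLLcoef k l m n := by
  unfold LLLcoef; positivity

lemma coef_le (k l m n : ℕ) (h : k + l = m + n) :
    LLLcoef k l m n ≤ 3 * ((1:ℝ)+((k+l:ℕ):ℝ))^(-(1/2):ℝ)
      * Real.exp (-((k:ℝ)-(l:ℝ))^2/(16*((k:ℝ)+(l:ℝ))))
      * Real.exp (-(2*(m:ℝ)-((k:ℝ)+(l:ℝ)))^2/(16*((k:ℝ)+(l:ℝ)))) := by
  set s := k + l with hs
  have hks : k ≤ s := by omega
  have hms : m ≤ s := by omega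
  have hsk : s - k = l := by omega
  have hsm : s - m = n := by omega
  -- factorial identities
  have hckl : (s.choose k : ℝ) * ((k.factorial : ℝ) * (l.factorial : ℝ)) = (s.factorial : ℝ) := by
    have := Nat.choose_mul_factorial_mul_factorial hks
    rw [hsk] at this
    exact_mod_cast congrArg (Nat.cast (R := ℝ)) (by rw [← this]; ring)
  have hcmn : (s.choose m : ℝ) * ((m.factorial : ℝ) * (n.factorial : ℝ)) = (s.factorial : ℝ) := by
    have := Nat.choose_mul_factorial_mul_factorial hms
    rw [hsm] at this
    exact_mod_cast congrArg (Nat.cast (R := ℝ)) (by rw [← this]; ring)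
  set P : ℝ := (k.factorial : ℝ) * l.factorial * m.factorial * n.factorial with hP
  have hPpos : 0 < P := by
    rw [hP]; positivity
  have hfact2 : ((s.factorial : ℝ))^2 = (s.choose k : ℝ) * (s.choose m : ℝ) * P := by
    rw [hP]
    nlinarith [hckl, hcmn]
  -- coefficient squared
  have hcoefsq : (LLLcoef k l m n)^2 = (s.choose k : ℝ) * (s.choose m : ℝ) / 4^s := by
    unfold LLLcoef
    rw [div_pow, mul_pow, Real.sq_sqrt (by rw [← hP]; exact hPpos.le)]
    rw [← hs, ← hP, hfact2]
    rw [show ((2:ℝ)^s)^2 = 4^s by rw [← pow_mul, show (4:ℝ) = 2^2 by norm_num, ← pow_mul]; ring_nf]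
    field_simp
  -- target squared
  set E1 : ℝ := Real.exp (-((k:ℝ)-(l:ℝ))^2/(16*((k:ℝ)+(l:ℝ)))) with hE1
  set E2 : ℝ := Real.exp (-(2*(m:ℝ)-((k:ℝ)+(l:ℝ)))^2/(16*((k:ℝ)+(l:ℝ)))) with hE2
  set A : ℝ := ((1:ℝ)+((s:ℕ):ℝ))^(-(1/2):ℝ) with hA
  have hA0 : 0 ≤ A := by rw [hA]; positivity
  have hE10 : 0 < E1 := Real.exp_pos _
  have hE20 : 0 < E2 := Real.exp_pos _
  have hT0 : 0 ≤ 3 * A * E1 * E2 := by positivity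
  -- key: squares comparison
  have hsq : (LLLcoef k l m n)^2 ≤ (3 * A * E1 * E2)^2 := by
    have g1 := choose_gauss s k
    have g2 := choose_gauss s m
    have hsqrt0 : (0:ℝ) ≤ Real.sqrt ((s:ℝ)+1) := Real.sqrt_nonneg _
    have hc0 : (0:ℝ) ≤ (s.choose k : ℝ) := Nat.cast_nonneg _
    have hc0' : (0:ℝ) ≤ (s.choose m : ℝ) := Nat.cast_nonneg _
    have hprod : ((s.choose k : ℝ) * Real.sqrt ((s:ℝ)+1)) * ((s.choose m : ℝ) * Real.sqrt ((s:ℝ)+1))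
        ≤ (3 * 2^s * Real.exp (-(2*(k:ℝ)-s)^2/(8*s))) * (3 * 2^s * Real.exp (-(2*(m:ℝ)-s)^2/(8*s))) := by
      exact mul_le_mul g1 g2 (mul_nonneg hc0' hsqrt0) (by positivity)
    have hss : Real.sqrt ((s:ℝ)+1) * Real.sqrt ((s:ℝ)+1) = (s:ℝ)+1 :=
      Real.mul_self_sqrt (by positivity)
    -- rewrite exps
    have hcast : ((s:ℕ):ℝ) = (k:ℝ) + l := by rw [hs]; push_cast; ring
    have he1 : Real.exp (-(2*(k:ℝ)-s)^2/(8*s)) = E1^2 := by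
      rw [hE1, ← Real.exp_nat_mul]
      congr 1
      rw [hcast]
      push_cast
      rcases eq_or_ne ((k:ℝ)+(l:ℝ)) 0 with h0 | h0
      · rw [h0]; norm_num
      · field_simp; ring
    have he2 : Real.exp (-(2*(m:ℝ)-s)^2/(8*s)) = E2^2 := by
      rw [hE2, ← Real.exp_nat_mul]
      congr 1
      rw [hcast]
      push_cast
      rcases eq_or_ne ((k:ℝ)+(l:ℝ)) 0 with h0 | h0
      · rw [h0]; norm_num
      · field_simp; ring
    have hA2 : A^2 = ((s:ℝ)+1)⁻¹ := by
      rw [hA, ← Real.rpow_natCast (((1:ℝ)+((s:ℕ):ℝ))^(-(1/2):ℝ)) 2, ← Real.rpow_mul (by positivity)]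
      rw [show (-(1/2):ℝ) * ((2:ℕ):ℝ) = -1 by push_cast; ring]
      rw [Real.rpow_neg_one]
      congr 1
      ring
    rw [hcoefsq]
    have hexpand : (3 * A * E1 * E2)^2 = 9 * A^2 * E1^2 * E2^2 := by ring
    rw [hexpand, hA2]
    rw [he1, he2] at hprod
    have hs1 : (0:ℝ) < (s:ℝ)+1 := by positivity
    have h4 : (0:ℝ) < (4:ℝ)^s := by positivity
    rw [div_le_iff₀ h4]
    have e44 : ((2:ℝ)^s) * ((2:ℝ)^s) = 4^s := by
      rw [← pow_add, show (4:ℝ) = 2^2 by norm_num, ← pow_mul]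
      ring_nf
    calc (s.choose k : ℝ) * (s.choose m : ℝ)
        = ((s.choose k : ℝ) * Real.sqrt ((s:ℝ)+1)) * ((s.choose m : ℝ) * Real.sqrt ((s:ℝ)+1)) / ((s:ℝ)+1) := by
          rw [show ((s.choose k : ℝ) * Real.sqrt ((s:ℝ)+1)) * ((s.choose m : ℝ) * Real.sqrt ((s:ℝ)+1))
            = (s.choose k : ℝ) * (s.choose m : ℝ) * (Real.sqrt ((s:ℝ)+1) * Real.sqrt ((s:ℝ)+1)) by ring, hss]
          field_simp
      _ ≤ (3 * 2^s * E1^2) * (3 * 2^s * E2^2) / ((s:ℝ)+1) := by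
          exact (div_le_div_iff_of_pos_right hs1).mpr hprod
      _ = 9 * ((s:ℝ)+1)⁻¹ * E1^2 * E2^2 * 4^s := by
          rw [← e44]; field_simp; ring
  have hcoef0 := LLLcoef_nonneg k l m n
  have := le_of_pow_le_pow_left₀ (n := 2) (by norm_num) hT0 hsq
  calc LLLcoef k l m n ≤ 3 * A * E1 * E2 := this
    _ = 3 * ((1:ℝ)+((k+l:ℕ):ℝ))^(-(1/2):ℝ) * E1 * E2 := by rw [hA]

lemma weight_le (α : ℝ) (hα : 1/4 ≤ α) (k l m n : ℕ) (h : k + l = m + n) :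
    ((1:ℝ)+(k:ℝ))^α * (((1:ℝ)+(l:ℝ))^(-α) * (((1:ℝ)+(m:ℝ))^(-α) * ((1:ℝ)+(n:ℝ))^(-α)))
      ≤ ((1:ℝ)+(l:ℝ))^(-(1/4):ℝ) * (((1:ℝ)+(k:ℝ))^((1/4):ℝ) * ((((1:ℝ)+(m:ℝ))*((1:ℝ)+(n:ℝ)))^(-(1/4):ℝ))) := by
  have pk : (0:ℝ) < 1+(k:ℝ) := by positivity
  have pl : (0:ℝ) < 1+(l:ℝ) := by positivity
  have pm : (0:ℝ) < 1+(m:ℝ) := by positivity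
  have pn : (0:ℝ) < 1+(n:ℝ) := by positivity
  set x : ℝ := (1+(k:ℝ)) / ((1+(m:ℝ))*(1+(n:ℝ))) with hx
  have hxpos : 0 < x := by rw [hx]; positivity
  have hkmn : (1:ℝ)+(k:ℝ) ≤ (1+(m:ℝ))*(1+(n:ℝ)) := by
    have hcast : (k:ℝ) + l = (m:ℝ) + n := by exact_mod_cast congrArg (Nat.cast (R := ℝ)) h
    nlinarith [Nat.cast_nonneg (α := ℝ) l, Nat.cast_nonneg (α := ℝ) m, Nat.cast_nonneg (α := ℝ) n,
      mul_nonneg (Nat.cast_nonneg (α := ℝ) m) (Nat.cast_nonneg (α := ℝ) n)]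
  have hx1 : x ≤ 1 := by
    rw [hx, div_le_one (by positivity)]
    exact hkmn
  have hxa : ((1:ℝ)+(k:ℝ))^α * (((1:ℝ)+(m:ℝ))^(-α) * ((1:ℝ)+(n:ℝ))^(-α)) = x^α := by
    rw [hx, Real.div_rpow pk.le (by positivity), Real.mul_rpow pm.le pn.le]
    rw [Real.rpow_neg pm.le, Real.rpow_neg pn.le]
    field_simp
  have hxq : x^((1/4):ℝ) = ((1:ℝ)+(k:ℝ))^((1/4):ℝ) * ((((1:ℝ)+(m:ℝ))*((1:ℝ)+(n:ℝ)))^(-(1/4):ℝ)) := by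
    rw [hx, Real.div_rpow pk.le (by positivity), Real.rpow_neg (by positivity)]
    field_simp
  have h1 : ((1:ℝ)+(l:ℝ))^(-α) ≤ ((1:ℝ)+(l:ℝ))^(-(1/4):ℝ) := by
    apply Real.rpow_le_rpow_of_exponent_le (by linarith [Nat.cast_nonneg (α := ℝ) l])
    linarith
  have h2 : x^α ≤ x^((1/4):ℝ) := Real.rpow_le_rpow_of_exponent_ge hxpos hx1 hα
  calc ((1:ℝ)+(k:ℝ))^α * (((1:ℝ)+(l:ℝ))^(-α) * (((1:ℝ)+(m:ℝ))^(-α) * ((1:ℝ)+(n:ℝ))^(-α)))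
      = ((1:ℝ)+(l:ℝ))^(-α) * (((1:ℝ)+(k:ℝ))^α * (((1:ℝ)+(m:ℝ))^(-α) * ((1:ℝ)+(n:ℝ))^(-α))) := by ring
    _ = ((1:ℝ)+(l:ℝ))^(-α) * x^α := by rw [hxa]
    _ ≤ ((1:ℝ)+(l:ℝ))^(-(1/4):ℝ) * x^((1/4):ℝ) := by
        apply mul_le_mul h1 h2 (Real.rpow_nonneg hxpos.le _) (Real.rpow_nonneg pl.le _)
    _ = _ := by rw [hxq]

lemma kfac_le (k l : ℕ) :
    ((1:ℝ)+((k+l:ℕ):ℝ))^(-(1/2):ℝ) * (((1:ℝ)+(k:ℝ))^((1/4):ℝ) * ((1:ℝ)+(l:ℝ))^(-(1/4):ℝ))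
      ≤ ((1:ℝ)+(l:ℝ))^(-(1/2):ℝ) := by
  have pk : (0:ℝ) < 1+(k:ℝ) := by positivity
  have pl : (0:ℝ) < 1+(l:ℝ) := by positivity
  have hcast : ((k+l:ℕ):ℝ) = (k:ℝ)+(l:ℝ) := by push_cast; ring
  rw [hcast]
  have ps : (0:ℝ) < 1+((k:ℝ)+(l:ℝ)) := by positivity
  have hbase : (1+(k:ℝ))*(1+(l:ℝ)) ≤ (1+((k:ℝ)+(l:ℝ)))^2 := by
    nlinarith [mul_nonneg (Nat.cast_nonneg (α := ℝ) k) (Nat.cast_nonneg (α := ℝ) l),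
      Nat.cast_nonneg (α := ℝ) k, Nat.cast_nonneg (α := ℝ) l]
  have hkl : ((1+(k:ℝ))*(1+(l:ℝ)))^((1/4):ℝ) ≤ (1+((k:ℝ)+(l:ℝ)))^((1/2):ℝ) := by
    have h1 : ((1+((k:ℝ)+(l:ℝ)))^2)^((1/4):ℝ) = (1+((k:ℝ)+(l:ℝ)))^((1/2):ℝ) := by
      rw [← Real.rpow_natCast (1+((k:ℝ)+(l:ℝ))) 2, ← Real.rpow_mul ps.le]
      norm_num
    rw [← h1]
    exact Real.rpow_le_rpow (by positivity) hbase (by norm_num)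
  have e1 : ((1:ℝ)+(k:ℝ))^((1/4):ℝ) * ((1:ℝ)+(l:ℝ))^(-(1/4):ℝ)
      = ((1+(k:ℝ))*(1+(l:ℝ)))^((1/4):ℝ) * ((1:ℝ)+(l:ℝ))^(-(1/2):ℝ) := by
    rw [Real.mul_rpow pk.le pl.le]
    rw [show (-(1/4):ℝ) = (1/4:ℝ) + (-(1/2):ℝ) by norm_num, Real.rpow_add pl]
    ring
  rw [e1]
  have e2 : ((1:ℝ)+((k:ℝ)+(l:ℝ)))^(-(1/2):ℝ) * (1+((k:ℝ)+(l:ℝ)))^((1/2):ℝ) = 1 := by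
    rw [← Real.rpow_add ps]
    norm_num
  calc (1+((k:ℝ)+(l:ℝ)))^(-(1/2):ℝ) * (((1+(k:ℝ))*(1+(l:ℝ)))^((1/4):ℝ) * ((1:ℝ)+(l:ℝ))^(-(1/2):ℝ))
      ≤ (1+((k:ℝ)+(l:ℝ)))^(-(1/2):ℝ) * ((1+((k:ℝ)+(l:ℝ)))^((1/2):ℝ) * ((1:ℝ)+(l:ℝ))^(-(1/2):ℝ)) := by
        apply mul_le_mul_of_nonneg_left _ (Real.rpow_nonneg ps.le _)
        apply mul_le_mul_of_nonneg_right hkl (Real.rpow_nonneg pl.le _)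
    _ = ((1+((k:ℝ)+(l:ℝ)))^(-(1/2):ℝ) * (1+((k:ℝ)+(l:ℝ)))^((1/2):ℝ)) * ((1:ℝ)+(l:ℝ))^(-(1/2):ℝ) := by ring
    _ = ((1:ℝ)+(l:ℝ))^(-(1/2):ℝ) := by rw [e2, one_mul]

lemma per_term (α : ℝ) (hα : 1/4 ≤ α) (k l m n : ℕ) (h : k + l = m + n) :
    ((1:ℝ)+(k:ℝ))^α * LLLcoef k l m n
        * (((1:ℝ)+(l:ℝ))^(-α) * (((1:ℝ)+(m:ℝ))^(-α) * ((1:ℝ)+(n:ℝ))^(-α)))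
      ≤ 3 * (((1:ℝ)+(l:ℝ))^(-(1/2):ℝ) * Real.exp (-((k:ℝ)-(l:ℝ))^2/(16*((k:ℝ)+(l:ℝ)))))
        * (Real.exp (-(2*(m:ℝ)-((k:ℝ)+(l:ℝ)))^2/(16*((k:ℝ)+(l:ℝ))))
            * ((((1:ℝ)+(m:ℝ))*((1:ℝ)+(n:ℝ)))^(-(1/4):ℝ)) ) := by
  have pk : (0:ℝ) < 1+(k:ℝ) := by positivity
  have pl : (0:ℝ) < 1+(l:ℝ) := by positivity
  have hW0 : (0:ℝ) ≤ ((1:ℝ)+(l:ℝ))^(-α) * (((1:ℝ)+(m:ℝ))^(-α) * ((1:ℝ)+(n:ℝ))^(-α)) := by positivity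
  have hka : (0:ℝ) ≤ ((1:ℝ)+(k:ℝ))^α := Real.rpow_nonneg pk.le _
  have hc := coef_le k l m n h
  have hw := weight_le α hα k l m n h
  have hk := kfac_le k l
  set E1 : ℝ := Real.exp (-((k:ℝ)-(l:ℝ))^2/(16*((k:ℝ)+(l:ℝ)))) with hE1
  set E2 : ℝ := Real.exp (-(2*(m:ℝ)-((k:ℝ)+(l:ℝ)))^2/(16*((k:ℝ)+(l:ℝ)))) with hE2
  have hE10 : 0 < E1 := Real.exp_pos _
  have hE20 : 0 < E2 := Real.exp_pos _
  set A : ℝ := ((1:ℝ)+((k+l:ℕ):ℝ))^(-(1/2):ℝ) with hA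
  have hA0 : 0 ≤ A := Real.rpow_nonneg (by positivity) _
  set X : ℝ := (((1:ℝ)+(m:ℝ))*((1:ℝ)+(n:ℝ)))^(-(1/4):ℝ) with hX
  have hX0 : 0 ≤ X := Real.rpow_nonneg (by positivity) _
  calc ((1:ℝ)+(k:ℝ))^α * LLLcoef k l m n
        * (((1:ℝ)+(l:ℝ))^(-α) * (((1:ℝ)+(m:ℝ))^(-α) * ((1:ℝ)+(n:ℝ))^(-α)))
      = LLLcoef k l m n * (((1:ℝ)+(k:ℝ))^α * (((1:ℝ)+(l:ℝ))^(-α) * (((1:ℝ)+(m:ℝ))^(-α) * ((1:ℝ)+(n:ℝ))^(-α)))) := by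
        ring
    _ ≤ (3 * A * E1 * E2) * (((1:ℝ)+(l:ℝ))^(-(1/4):ℝ) * (((1:ℝ)+(k:ℝ))^((1/4):ℝ) * X)) := by
        apply mul_le_mul hc hw (by positivity) (by positivity)
    _ = 3 * (A * (((1:ℝ)+(k:ℝ))^((1/4):ℝ) * ((1:ℝ)+(l:ℝ))^(-(1/4):ℝ))) * (E1 * (E2 * X)) := by
        ring
    _ ≤ 3 * ((1:ℝ)+(l:ℝ))^(-(1/2):ℝ) * (E1 * (E2 * X)) := by
        apply mul_le_mul_of_nonneg_right _ (by positivity)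
        apply mul_le_mul_of_nonneg_left hk (by norm_num)
    _ = 3 * (((1:ℝ)+(l:ℝ))^(-(1/2):ℝ) * E1) * (E2 * X) := by ring

noncomputable def Gmaj (k l m n : ℕ) : ℝ :=
  3 * (((1:ℝ)+(l:ℝ))^(-(1/2):ℝ) * Real.exp (-((k:ℝ)-(l:ℝ))^2/(16*((k:ℝ)+(l:ℝ)))))
    * (Real.exp (-(2*(m:ℝ)-((k:ℝ)+(l:ℝ)))^2/(16*((k:ℝ)+(l:ℝ))))
        * ((((1:ℝ)+(m:ℝ))*((1:ℝ)+(n:ℝ)))^(-(1/4):ℝ)))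

lemma Gmaj_nonneg (k l m n : ℕ) : 0 ≤ Gmaj k l m n := by
  unfold Gmaj; positivity

lemma per_term_G (α : ℝ) (hα : 1/4 ≤ α) (k l m n : ℕ) (h : k + l = m + n) :
    ((1:ℝ)+(k:ℝ))^α * LLLcoef k l m n
        * (((1:ℝ)+(l:ℝ))^(-α) * (((1:ℝ)+(m:ℝ))^(-α) * ((1:ℝ)+(n:ℝ))^(-α)))
      ≤ Gmaj k l m n := by
  unfold Gmaj
  exact per_term α hα k l m n h

/-- Inner rectangle sum. -/
lemma Gmaj_row (k l : ℕ) :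
    ∑ m ∈ range (k+l+1), Gmaj k l m (k+l-m)
      ≤ 600 * (((1:ℝ)+(l:ℝ))^(-(1/2):ℝ) * Real.exp (-((k:ℝ)-(l:ℝ))^2/(16*((k:ℝ)+(l:ℝ))))) := by
  have hcast : (((k+l : ℕ)):ℝ) = (k:ℝ)+(l:ℝ) := by push_cast; ring
  have hW0 : (0:ℝ) ≤ ((1:ℝ)+(l:ℝ))^(-(1/2):ℝ) * Real.exp (-((k:ℝ)-(l:ℝ))^2/(16*((k:ℝ)+(l:ℝ)))) := by
    positivity
  have hinner := inner_sum_le (k+l)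
  rw [hcast] at hinner
  calc ∑ m ∈ range (k+l+1), Gmaj k l m (k+l-m)
      = 3 * (((1:ℝ)+(l:ℝ))^(-(1/2):ℝ) * Real.exp (-((k:ℝ)-(l:ℝ))^2/(16*((k:ℝ)+(l:ℝ)))))
        * ∑ m ∈ range (k+l+1),
            (Real.exp (-(2*(m:ℝ)-((k:ℝ)+(l:ℝ)))^2/(16*((k:ℝ)+(l:ℝ))))
              * ((((1:ℝ)+(m:ℝ))*((1:ℝ)+(((k+l-m : ℕ)):ℝ)))^(-(1/4):ℝ))) := by
        rw [Finset.mul_sum]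
        apply Finset.sum_congr rfl
        intro m _
        unfold Gmaj
        ring
    _ ≤ 3 * (((1:ℝ)+(l:ℝ))^(-(1/2):ℝ) * Real.exp (-((k:ℝ)-(l:ℝ))^2/(16*((k:ℝ)+(l:ℝ))))) * 200 := by
        apply mul_le_mul_of_nonneg_left _ (by positivity)
        exact hinner
    _ = 600 * (((1:ℝ)+(l:ℝ))^(-(1/2):ℝ) * Real.exp (-((k:ℝ)-(l:ℝ))^2/(16*((k:ℝ)+(l:ℝ))))) := by ring

/-- Sum of the majorant over any finite set of on-shell triples. -/
lemma sum_G_le (k : ℕ) (u : Finset (ℕ × ℕ × ℕ)) (hu : ∀ t ∈ u, k + t.1 = t.2.1 + t.2.2) :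
    ∑ t ∈ u, Gmaj k t.1 t.2.1 t.2.2 ≤ 120000 := by
  classical
  set ψ : ℕ × ℕ × ℕ → ℕ × ℕ := fun t => (t.1, t.2.1) with hψ
  set v : Finset (ℕ × ℕ) := u.image ψ with hv
  have hinj : ∀ t₁ ∈ u, ∀ t₂ ∈ u, ψ t₁ = ψ t₂ → t₁ = t₂ := by
    intro t₁ h₁ t₂ h₂ he
    have e1 := hu t₁ h₁
    have e2 := hu t₂ h₂
    have : t₁.1 = t₂.1 ∧ t₁.2.1 = t₂.2.1 := by
      rw [hψ] at he
      simp only [Prod.mk.injEq] at he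
      exact he
    obtain ⟨ha, hb⟩ := this
    have : t₁.2.2 = t₂.2.2 := by omega
    ext <;> simp_all
  have himg : ∑ t ∈ u, Gmaj k t.1 t.2.1 t.2.2 = ∑ p ∈ v, Gmaj k p.1 p.2 (k + p.1 - p.2) := by
    rw [hv, Finset.sum_image hinj]
    apply Finset.sum_congr rfl
    intro t ht
    have := hu t ht
    have h3 : k + t.1 - t.2.1 = t.2.2 := by omega
    rw [hψ]
    simp only
    rw [h3]
  rw [himg]
  set L : Finset ℕ := v.image Prod.fst with hL
  have hsub : v ⊆ L.biUnion (fun l => ({l} : Finset ℕ) ×ˢ range (k+l+1)) := by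
    intro p hp
    rw [Finset.mem_biUnion]
    refine ⟨p.1, ?_, ?_⟩
    · rw [hL]; exact Finset.mem_image_of_mem _ hp
    · rw [Finset.mem_product, Finset.mem_singleton, Finset.mem_range]
      refine ⟨rfl, ?_⟩
      rw [hv] at hp
      obtain ⟨t, ht, hte⟩ := Finset.mem_image.mp hp
      have := hu t ht
      have h1 : p.1 = t.1 := by rw [← hte]
      have h2 : p.2 = t.2.1 := by rw [← hte]
      omega
  have hdisj : (L : Set ℕ).PairwiseDisjoint (fun l => ({l} : Finset ℕ) ×ˢ range (k+l+1)) := by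
    intro a _ b _ hab
    apply Finset.disjoint_left.mpr
    intro p hp hq
    rw [Finset.mem_product, Finset.mem_singleton] at hp hq
    exact hab (hp.1.symm.trans hq.1)
  calc ∑ p ∈ v, Gmaj k p.1 p.2 (k + p.1 - p.2)
      ≤ ∑ p ∈ L.biUnion (fun l => ({l} : Finset ℕ) ×ˢ range (k+l+1)), Gmaj k p.1 p.2 (k + p.1 - p.2) := by
        apply Finset.sum_le_sum_of_subset_of_nonneg hsub
        intro p _ _
        exact Gmaj_nonneg _ _ _ _
    _ = ∑ l ∈ L, ∑ p ∈ ({l} : Finset ℕ) ×ˢ range (k+l+1), Gmaj k p.1 p.2 (k + p.1 - p.2) := by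
        rw [Finset.sum_biUnion hdisj]
    _ = ∑ l ∈ L, ∑ m ∈ range (k+l+1), Gmaj k l m (k+l-m) := by
        apply Finset.sum_congr rfl
        intro l _
        rw [Finset.sum_product, Finset.sum_singleton]
    _ ≤ ∑ l ∈ L, 600 * (((1:ℝ)+(l:ℝ))^(-(1/2):ℝ) * Real.exp (-((k:ℝ)-(l:ℝ))^2/(16*((k:ℝ)+(l:ℝ))))) := by
        apply Finset.sum_le_sum
        intro l _
        exact Gmaj_row k l
    _ ≤ 120000 := by
        obtain ⟨N, hN⟩ := Finset.exists_nat_subset_range L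
        have h1 : ∑ l ∈ L, 600 * (((1:ℝ)+(l:ℝ))^(-(1/2):ℝ) * Real.exp (-((k:ℝ)-(l:ℝ))^2/(16*((k:ℝ)+(l:ℝ)))))
            ≤ ∑ l ∈ range N, 600 * (((1:ℝ)+(l:ℝ))^(-(1/2):ℝ) * Real.exp (-((k:ℝ)-(l:ℝ))^2/(16*((k:ℝ)+(l:ℝ))))) := by
          apply Finset.sum_le_sum_of_subset_of_nonneg hN
          intro l _ _
          positivity
        have h2 := outer_sum_le k N
        calc _ ≤ _ := h1
          _ = 600 * ∑ l ∈ range N, ((1:ℝ)+(l:ℝ))^(-(1/2):ℝ) * Real.exp (-((k:ℝ)-(l:ℝ))^2/(16*((k:ℝ)+(l:ℝ)))) := by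
              rw [Finset.mul_sum]
          _ ≤ 600 * 200 := by
              apply mul_le_mul_of_nonneg_left h2 (by norm_num)
          _ = 120000 := by norm_num

lemma norm_LLLterm (c : ℕ → ℂ) (k : ℕ) (t : ℕ × ℕ × ℕ) :
    ‖LLLterm c k t‖ = (if k + t.1 = t.2.1 + t.2.2 then
      LLLcoef k t.1 t.2.1 t.2.2 * (‖c t.1‖ * (‖c t.2.1‖ * ‖c t.2.2‖)) else 0) := by
  unfold LLLterm
  split
  · rw [norm_mul, norm_mul, norm_mul, Complex.norm_real, RCLike.norm_conj,
      Real.norm_eq_abs, abs_of_nonneg (LLLcoef_nonneg k t.1 t.2.1 t.2.2)]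
    ring
  · simp

/-- For `α ≥ 1/4`, the trilinear map `T(c)_k = (1/2π) Σ_{k+ℓ=m+n} coef · c̄_ℓ c_m c_n`
maps `ℓ^{∞,α}` boundedly into itself: the sums converge absolutely and
`(1+k)^α |T(c)_k| ≤ C B³` whenever `(1+k)^α |c_k| ≤ B` for all `k`. -/
theorem lll_trilinear_bound (α : ℝ) (hα : (1 : ℝ) / 4 ≤ α) :
    ∃ C : ℝ, 0 < C ∧ ∀ (c : ℕ → ℂ) (B : ℝ), 0 ≤ B →
      (∀ k : ℕ, ((1 : ℝ) + k) ^ α * ‖c k‖ ≤ B) →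
      ∀ k : ℕ,
        Summable (fun t : ℕ × ℕ × ℕ => ‖LLLterm c k t‖) ∧
        ((1 : ℝ) + k) ^ α *
            ‖((1 / (2 * Real.pi) : ℝ) : ℂ) * ∑' t : ℕ × ℕ × ℕ, LLLterm c k t‖ ≤ C * B ^ 3 := by
  classical
  refine ⟨120000, by norm_num, ?_⟩
  intro c B hB hc k
  set A : ℝ := ((1:ℝ)+(k:ℝ))^α with hA
  have hApos : 0 < A := Real.rpow_pos_of_pos (by positivity) _
  -- norm bounds on coefficients
  have hcb : ∀ j : ℕ, ‖c j‖ ≤ B * ((1:ℝ)+(j:ℝ))^(-α) := by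
    intro j
    have h1 := hc j
    have h2 : (0:ℝ) < ((1:ℝ)+(j:ℝ))^α := Real.rpow_pos_of_pos (by positivity) _
    rw [Real.rpow_neg (by positivity)]
    rw [mul_comm] at h1
    calc ‖c j‖ = ‖c j‖ * (((1:ℝ)+(j:ℝ))^α * (((1:ℝ)+(j:ℝ))^α)⁻¹) := by
          rw [mul_inv_cancel₀ h2.ne', mul_one]
      _ = (‖c j‖ * ((1:ℝ)+(j:ℝ))^α) * (((1:ℝ)+(j:ℝ))^α)⁻¹ := by ring
      _ ≤ B * (((1:ℝ)+(j:ℝ))^α)⁻¹ := by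
          apply mul_le_mul_of_nonneg_right h1 (by positivity)
  -- per-term bound
  have hterm : ∀ t : ℕ × ℕ × ℕ, A * ‖LLLterm c k t‖
      ≤ B^3 * (if k + t.1 = t.2.1 + t.2.2 then Gmaj k t.1 t.2.1 t.2.2 else 0) := by
    intro t
    obtain ⟨l, m, n⟩ := t
    rw [norm_LLLterm]
    simp only
    split
    case isTrue h =>
      have hcoef0 := LLLcoef_nonneg k l m n
      have hnorm3 : ‖c l‖ * (‖c m‖ * ‖c n‖)
          ≤ B^3 * (((1:ℝ)+(l:ℝ))^(-α) * (((1:ℝ)+(m:ℝ))^(-α) * ((1:ℝ)+(n:ℝ))^(-α))) := by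
        calc ‖c l‖ * (‖c m‖ * ‖c n‖)
            ≤ (B * ((1:ℝ)+(l:ℝ))^(-α)) * ((B * ((1:ℝ)+(m:ℝ))^(-α)) * (B * ((1:ℝ)+(n:ℝ))^(-α))) := by
              apply mul_le_mul (hcb l) _ (by positivity) (by positivity)
              apply mul_le_mul (hcb m) (hcb n) (norm_nonneg _) (by positivity)
          _ = B^3 * (((1:ℝ)+(l:ℝ))^(-α) * (((1:ℝ)+(m:ℝ))^(-α) * ((1:ℝ)+(n:ℝ))^(-α))) := by ring
      calc A * (LLLcoef k l m n * (‖c l‖ * (‖c m‖ * ‖c n‖)))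
          ≤ A * (LLLcoef k l m n *
              (B^3 * (((1:ℝ)+(l:ℝ))^(-α) * (((1:ℝ)+(m:ℝ))^(-α) * ((1:ℝ)+(n:ℝ))^(-α))))) := by
            apply mul_le_mul_of_nonneg_left _ hApos.le
            exact mul_le_mul_of_nonneg_left hnorm3 hcoef0
        _ = B^3 * (A * LLLcoef k l m n *
              (((1:ℝ)+(l:ℝ))^(-α) * (((1:ℝ)+(m:ℝ))^(-α) * ((1:ℝ)+(n:ℝ))^(-α)))) := by
            rw [hA]; ring
        _ ≤ B^3 * Gmaj k l m n := by
            apply mul_le_mul_of_nonneg_left _ (by positivity)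
            rw [hA]
            exact per_term_G α hα k l m n h
    case isFalse h =>
      simp
  -- partial sums bound
  have hpartial : ∀ u : Finset (ℕ × ℕ × ℕ), ∑ t ∈ u, ‖LLLterm c k t‖ ≤ 120000 * B^3 / A := by
    intro u
    rw [le_div_iff₀ hApos]
    have h1 : (∑ t ∈ u, ‖LLLterm c k t‖) * A = ∑ t ∈ u, A * ‖LLLterm c k t‖ := by
      rw [Finset.sum_mul]
      apply Finset.sum_congr rfl
      intro t _
      ring
    rw [h1]
    have h2 : ∑ t ∈ u, A * ‖LLLterm c k t‖
        ≤ ∑ t ∈ u, B^3 * (if k + t.1 = t.2.1 + t.2.2 then Gmaj k t.1 t.2.1 t.2.2 else 0) :=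
      Finset.sum_le_sum (fun t _ => hterm t)
    have h3 : ∑ t ∈ u, B^3 * (if k + t.1 = t.2.1 + t.2.2 then Gmaj k t.1 t.2.1 t.2.2 else 0)
        = B^3 * ∑ t ∈ u.filter (fun t => k + t.1 = t.2.1 + t.2.2), Gmaj k t.1 t.2.1 t.2.2 := by
      rw [Finset.mul_sum, Finset.sum_filter]
      apply Finset.sum_congr rfl
      intro t _
      rw [mul_ite, mul_zero]
    have h4 : ∑ t ∈ u.filter (fun t => k + t.1 = t.2.1 + t.2.2), Gmaj k t.1 t.2.1 t.2.2 ≤ 120000 := by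
      apply sum_G_le
      intro t ht
      exact (Finset.mem_filter.mp ht).2
    calc ∑ t ∈ u, A * ‖LLLterm c k t‖ ≤ _ := h2
      _ = B^3 * ∑ t ∈ u.filter (fun t => k + t.1 = t.2.1 + t.2.2), Gmaj k t.1 t.2.1 t.2.2 := h3
      _ ≤ B^3 * 120000 := mul_le_mul_of_nonneg_left h4 (by positivity)
      _ = 120000 * B^3 := by ring
  have hsummable : Summable (fun t : ℕ × ℕ × ℕ => ‖LLLterm c k t‖) := by
    apply summable_of_sum_le (fun t => norm_nonneg _) hpartial
  refine ⟨hsummable, ?_⟩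
  have htsum : ∑' t : ℕ × ℕ × ℕ, ‖LLLterm c k t‖ ≤ 120000 * B^3 / A :=
    Summable.tsum_le_of_sum_le hsummable hpartial
  have hnorm : ‖∑' t : ℕ × ℕ × ℕ, LLLterm c k t‖ ≤ ∑' t : ℕ × ℕ × ℕ, ‖LLLterm c k t‖ :=
    norm_tsum_le_tsum_norm hsummable
  have hcst : ‖((1 / (2 * Real.pi) : ℝ) : ℂ)‖ ≤ 1 := by
    rw [Complex.norm_real, Real.norm_eq_abs, abs_of_nonneg (by positivity)]
    rw [div_le_one (by positivity)]
    nlinarith [Real.pi_gt_three]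
  have htsum0 : (0:ℝ) ≤ ∑' t : ℕ × ℕ × ℕ, ‖LLLterm c k t‖ := by
    apply tsum_nonneg
    intro t; exact norm_nonneg _
  calc A * ‖((1 / (2 * Real.pi) : ℝ) : ℂ) * ∑' t : ℕ × ℕ × ℕ, LLLterm c k t‖
      = A * (‖((1 / (2 * Real.pi) : ℝ) : ℂ)‖ * ‖∑' t : ℕ × ℕ × ℕ, LLLterm c k t‖) := by
        rw [norm_mul]
    _ ≤ A * (1 * (∑' t : ℕ × ℕ × ℕ, ‖LLLterm c k t‖)) := by
        apply mul_le_mul_of_nonneg_left _ hApos.le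
        apply mul_le_mul hcst hnorm (norm_nonneg _) (by norm_num)
    _ = A * ∑' t : ℕ × ℕ × ℕ, ‖LLLterm c k t‖ := by rw [one_mul]
    _ ≤ A * (120000 * B^3 / A) := mul_le_mul_of_nonneg_left htsum hApos.le
    _ = 120000 * B^3 := by field_simp
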